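/- arXiv:1901.08833 — 10 statements merged into one kernel-verified Lean document; each statement's English description precedes it below -/
import Mathlib

section
/- Let a ∈ gRe. Then the local algebra R_a of the ring R at a satisfies a polynomial identity if and only if the local algebra of the associative pair (eRg, gRe) at a satisfies a polynomial identity. (This expresses that the PI-elements of an associative pair are exactly the elements of the pair that are PI-elements of its standard imbedding: PI(A) = PI(ℰ) ∩ A.) -/
/-- Evaluation of a word (a nonempty list of variables, here any list with `[] ↦ 0`) in the
`a`-homotope of `R` (product `x · y = x * a * y`) under the assignment `v`. -/
def homotopeWordEval {R : Type*} [Ring R] (a : R) {n : ℕ} (v : Fin n → R) :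
    List (Fin n) → R
  | [] => 0
  | i :: w => w.foldl (fun acc j => acc * a * v j) (v i)

/-- A monic associative polynomial in `n` noncommuting variables with integer coefficients,
represented as a finitely supported family of coefficients indexed by words: all words in
its support are nonempty (no constant term), and some monomial of highest degree has
coefficient `1`.  (In particular the polynomial is nonzero.) -/
def IsMonicPoly {n : ℕ} (p : List (Fin n) →₀ ℤ) : Prop :=
  (∀ w ∈ p.support, w ≠ []) ∧
  ∃ w ∈ p.support, p w = 1 ∧ ∀ w' ∈ p.support, w'.length ≤ w.length

/-- The local algebra of `R` at `a` restricted to the subset `S` (with `S = univ` this is the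
local algebra `R_a = R^{(a)}/Ker a`; with `S` the Peirce space `eRg` it is the local algebra
of the pair `(eRg, gRe)` at `a ∈ gRe`) satisfies a polynomial identity: some monic integer
polynomial vanishes on it, i.e. all its evaluations in the `a`-homotope at elements of `S`
land in `Ker a = {x : a * x * a = 0}`. -/
def LocalAlgebraIsPI {R : Type*} [Ring R] (a : R) (S : Set R) : Prop :=
  ∃ (n : ℕ) (p : List (Fin n) →₀ ℤ), IsMonicPoly p ∧
    ∀ v : Fin n → R, (∀ i, v i ∈ S) →
      a * (p.sum fun w c => c • homotopeWordEval a v w) * a = 0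


lemma foldl_peirce {R : Type*} [Ring R] (e a : R) (ha : (1 - e) * a * e = a)
    {n : ℕ} (v : Fin n → R) :
    ∀ (w : List (Fin n)) (x : R),
      w.foldl (fun acc j => acc * a * (e * v j * (1 - e))) (e * x * (1 - e))
        = e * w.foldl (fun acc j => acc * a * v j) x * (1 - e) := by
  intro w
  induction w with
  | nil => intro x; rfl
  | cons j w ih =>
    intro x
    simp only [List.foldl_cons]
    have step : e * x * (1 - e) * a * (e * v j * (1 - e))
        = e * (x * a * v j) * (1 - e) := by
      calc e * x * (1 - e) * a * (e * v j * (1 - e))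
          = e * (x * (((1 - e) * a * e) * (v j * (1 - e)))) := by simp [mul_assoc]
        _ = e * (x * (a * (v j * (1 - e)))) := by rw [ha]
        _ = e * (x * a * v j) * (1 - e) := by simp [mul_assoc]
    rw [step, ih]

lemma eval_peirce {R : Type*} [Ring R] (e a : R) (ha : (1 - e) * a * e = a)
    {n : ℕ} (v : Fin n → R) (w : List (Fin n)) :
    homotopeWordEval a (fun i => e * v i * (1 - e)) w
      = e * homotopeWordEval a v w * (1 - e) := by
  cases w with
  | nil => simp [homotopeWordEval]
  | cons i w => exact foldl_peirce e a ha v w (v i)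

/-- Let `R` be a unital ring with an idempotent `e`, `g = 1 - e`, and let
`a ∈ gRe`.  Then the local algebra `R_a` of `R` at `a` satisfies a polynomial identity if and
only if the local algebra at `a` of the associative pair `(eRg, gRe)` does.  (This expresses
`PI(A) = PI(ℰ) ∩ A` for an associative pair `A` inside its standard imbedding `ℰ`.) -/
theorem stmt_0 {R : Type*} [Ring R] (e : R) (he : e * e = e)
    (a : R) (ha : (1 - e) * a * e = a) :
    LocalAlgebraIsPI a (Set.univ : Set R) ↔
      LocalAlgebraIsPI a {x : R | e * x * (1 - e) = x} := by
  have hg : (1 - e) * (1 - e) = (1 : R) - e := by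
    simp [mul_sub, sub_mul, he]
  have ae : a * e = a := by
    conv_lhs => rw [← ha]
    rw [mul_assoc ((1 - e) * a) e e, he, ha]
  have ea : (1 - e) * a = a := by
    conv_lhs => rw [← ha]
    rw [← mul_assoc (1 - e) ((1 - e) * a) e, ← mul_assoc (1 - e) (1 - e) a, hg, ha]
  have sandwich : ∀ Y : R, a * (e * Y * (1 - e)) * a = a * Y * a := by
    intro Y
    calc a * (e * Y * (1 - e)) * a = (a * e) * (Y * ((1 - e) * a)) := by simp [mul_assoc]
      _ = a * (Y * a) := by rw [ae, ea]
      _ = a * Y * a := by rw [mul_assoc]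
  constructor
  · rintro ⟨n, p, hp, hv⟩
    exact ⟨n, p, hp, fun v _ => hv v (fun i => trivial)⟩
  · rintro ⟨n, p, hp, hv⟩
    refine ⟨n, p, hp, fun v _ => ?_⟩
    have hv' : ∀ i, (e * v i * (1 - e)) ∈ {x : R | e * x * (1 - e) = x} := by
      intro i
      show e * (e * v i * (1 - e)) * (1 - e) = e * v i * (1 - e)
      calc e * (e * v i * (1 - e)) * (1 - e)
          = (e * e) * (v i * ((1 - e) * (1 - e))) := by simp [mul_assoc]
        _ = e * (v i * (1 - e)) := by rw [he, hg]
        _ = e * v i * (1 - e) := by rw [mul_assoc]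
    have h0 := hv (fun i => e * v i * (1 - e)) hv'
    have hsum : (p.sum fun w c => c • homotopeWordEval a (fun i => e * v i * (1 - e)) w)
        = e * (p.sum fun w c => c • homotopeWordEval a v w) * (1 - e) := by
      rw [Finsupp.sum, Finsupp.sum, Finset.mul_sum, Finset.sum_mul]
      refine Finset.sum_congr rfl (fun w _ => ?_)
      rw [eval_peirce e a ha, mul_smul_comm, smul_mul_assoc]
    rw [hsum, sandwich] at h0
    exact h0
end

section
/- Let a ∈ gRe. Then the map x ↦ e x g from R to eRg is a homomorphism from the a-homotope ring R^{(a)} onto the homotope (eRg, x · y = x a y), it is surjective, and an element x ∈ R is mapped into {y ∈ eRg : a y a = 0} if and only if a x a = 0; consequently it induces a ring isomorphism between the local algebra R_a of R at a and the local algebra of the pair (eRg, gRe) at a. -/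
/-- The `a`-homotope `R^{(a)}` of the ring `R`: the same additive group as `R`, with the
(nonunital) product `x · y = x * a * y`. -/
def Homotope (R : Type*) (_a : R) : Type _ := R

/-- The element of `R` underlying an element of the homotope `R^{(a)}`. -/
def Homotope.val {R : Type*} {a : R} (x : Homotope R a) : R := x

/-- The element of the homotope `R^{(a)}` corresponding to an element of `R`. -/
def Homotope.of {R : Type*} (a : R) (x : R) : Homotope R a := x

instance Homotope.instNonUnitalRing {R : Type*} [Ring R] (a : R) :
    NonUnitalRing (Homotope R a) :=
  let i : AddCommGroup (Homotope R a) := inferInstanceAs (AddCommGroup R)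
  { i with
    mul := fun x y => Homotope.of a (x.val * a * y.val)
    left_distrib := fun x y z => by
      show x.val * a * (y.val + z.val) = x.val * a * y.val + x.val * a * z.val
      noncomm_ring
    right_distrib := fun x y z => by
      show (x.val + y.val) * a * z.val = x.val * a * z.val + y.val * a * z.val
      noncomm_ring
    zero_mul := fun x => by show (0 : R) * a * x.val = 0; simp
    mul_zero := fun x => by show x.val * a * (0 : R) = 0; simp
    mul_assoc := fun x y z => by
      show (x.val * a * y.val) * a * z.val = x.val * a * (y.val * a * z.val)
      noncomm_ring }

theorem Homotope.mul_val {R : Type*} [Ring R] {a : R} (x y : Homotope R a) :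
    (x * y).val = x.val * a * y.val := rfl

theorem Homotope.add_val {R : Type*} [Ring R] {a : R} (x y : Homotope R a) :
    (x + y).val = x.val + y.val := rfl

/-- The Peirce space `eRg = {x | e x g = x}` (`g = 1 - e`) as an additive subgroup of `R`. -/
def peirceSubgroup {R : Type*} [Ring R] (e : R) : AddSubgroup R where
  carrier := {x | e * x * (1 - e) = x}
  zero_mem' := by simp
  add_mem' := by
    intro x y hx hy
    simp only [Set.mem_setOf_eq] at *
    rw [mul_add, add_mul, hx, hy]
  neg_mem' := by
    intro x hx
    simp only [Set.mem_setOf_eq] at *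
    rw [mul_neg, neg_mul, hx]

/-- The `a`-homotope of the Peirce space `eRg` of an idempotent `e`, i.e. the underlying
nonunital ring of the local-algebra construction for the associative pair `(eRg, gRe)`:
the product is `x · y = x * a * y`. -/
def PairHomotope {R : Type*} [Ring R] (e : {e : R // e * e = e}) (_a : R) : Type _ :=
  ↥(peirceSubgroup e.1)

namespace PairHomotope

variable {R : Type*} [Ring R] {e : {e : R // e * e = e}} {a : R}

/-- The underlying element of `R` of an element of the Peirce homotope. -/
def val (x : PairHomotope e a) : R := Subtype.val x

theorem prop (x : PairHomotope e a) : e.1 * x.val * (1 - e.1) = x.val := Subtype.prop x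

theorem absorb_left (x : PairHomotope e a) : e.1 * x.val = x.val := by
  conv_lhs => rw [← x.prop]
  rw [← mul_assoc, ← mul_assoc, e.2, x.prop]

theorem absorb_right (x : PairHomotope e a) : x.val * (1 - e.1) = x.val := by
  have hg : (1 - e.1) * (1 - e.1) = 1 - e.1 := by
    rw [sub_mul, mul_sub, mul_sub, e.2]; simp
  conv_lhs => rw [← x.prop]
  rw [mul_assoc, hg, x.prop]

instance : NonUnitalRing (PairHomotope e a) :=
  let i : AddCommGroup (PairHomotope e a) := inferInstanceAs (AddCommGroup ↥(peirceSubgroup e.1))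
  { i with
    mul := fun x y => ⟨x.val * a * y.val, by
      show e.1 * (x.val * a * y.val) * (1 - e.1) = x.val * a * y.val
      have h : e.1 * (x.val * a * y.val) * (1 - e.1)
          = (e.1 * x.val) * a * (y.val * (1 - e.1)) := by noncomm_ring
      rw [h, x.absorb_left, y.absorb_right]⟩
    left_distrib := fun x y z => by
      apply Subtype.ext
      show x.val * a * (y.val + z.val) = x.val * a * y.val + x.val * a * z.val
      noncomm_ring
    right_distrib := fun x y z => by
      apply Subtype.ext
      show (x.val + y.val) * a * z.val = x.val * a * z.val + y.val * a * z.val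
      noncomm_ring
    zero_mul := fun x => by
      apply Subtype.ext
      show (0 : R) * a * x.val = 0
      simp
    mul_zero := fun x => by
      apply Subtype.ext
      show x.val * a * (0 : R) = 0
      simp
    mul_assoc := fun x y z => by
      apply Subtype.ext
      show (x.val * a * y.val) * a * z.val = x.val * a * (y.val * a * z.val)
      noncomm_ring }

theorem mul_val (x y : PairHomotope e a) : (x * y).val = x.val * a * y.val := rfl

theorem add_val (x y : PairHomotope e a) : (x + y).val = x.val + y.val := rfl

end PairHomotope

/-- The congruence on the homotope `R^{(a)}` whose quotient is the local algebra
`R_a = R^{(a)} / Ker a` of `R` at `a`, where `Ker a = {x | a x a = 0}`. -/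
def homotopeLocalCon {R : Type*} [Ring R] (a : R) : RingCon (Homotope R a) where
  r x y := a * (x.val - y.val) * a = 0
  iseqv := by
    constructor
    · intro x; simp
    · intro x y h
      have key : a * (y.val - x.val) * a = -(a * (x.val - y.val) * a) := by noncomm_ring
      rw [key, h, neg_zero]
    · intro x y z h1 h2
      have key : a * (x.val - z.val) * a
          = a * (x.val - y.val) * a + a * (y.val - z.val) * a := by noncomm_ring
      rw [key, h1, h2, add_zero]
  mul' := by
    intro w x y z h1 h2
    show a * ((w * y).val - (x * z).val) * a = 0
    rw [Homotope.mul_val, Homotope.mul_val]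
    have key : a * ((w.val * a * y.val) - (x.val * a * z.val)) * a
        = (a * (w.val - x.val) * a) * (y.val * a)
          + (a * x.val) * (a * (y.val - z.val) * a) := by noncomm_ring
    rw [key, h1, h2]
    simp
  add' := by
    intro w x y z h1 h2
    show a * ((w + y).val - (x + z).val) * a = 0
    rw [Homotope.add_val, Homotope.add_val]
    have key : a * ((w.val + y.val) - (x.val + z.val)) * a
        = a * (w.val - x.val) * a + a * (y.val - z.val) * a := by noncomm_ring
    rw [key, h1, h2, add_zero]

/-- The congruence on the Peirce homotope `(eRg)^{(a)}` whose quotient is the local algebra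
of the associative pair `(eRg, gRe)` at `a`. -/
def pairLocalCon {R : Type*} [Ring R] (e : {e : R // e * e = e}) (a : R) :
    RingCon (PairHomotope e a) where
  r x y := a * (x.val - y.val) * a = 0
  iseqv := by
    constructor
    · intro x; simp
    · intro x y h
      have key : a * (y.val - x.val) * a = -(a * (x.val - y.val) * a) := by noncomm_ring
      rw [key, h, neg_zero]
    · intro x y z h1 h2
      have key : a * (x.val - z.val) * a
          = a * (x.val - y.val) * a + a * (y.val - z.val) * a := by noncomm_ring
      rw [key, h1, h2, add_zero]
  mul' := by
    intro w x y z h1 h2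
    show a * ((w * y).val - (x * z).val) * a = 0
    rw [PairHomotope.mul_val, PairHomotope.mul_val]
    have key : a * ((w.val * a * y.val) - (x.val * a * z.val)) * a
        = (a * (w.val - x.val) * a) * (y.val * a)
          + (a * x.val) * (a * (y.val - z.val) * a) := by noncomm_ring
    rw [key, h1, h2]
    simp
  add' := by
    intro w x y z h1 h2
    show a * ((w + y).val - (x + z).val) * a = 0
    rw [PairHomotope.add_val, PairHomotope.add_val]
    have key : a * ((w.val + y.val) - (x.val + z.val)) * a
        = a * (w.val - x.val) * a + a * (y.val - z.val) * a := by noncomm_ring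
    rw [key, h1, h2, add_zero]

/-- Let `R` be a unital ring with idempotent `e`, `g = 1 - e`, and let
`a ∈ gRe`.  The map `x ↦ e x g` is a (nonunital) ring homomorphism from the homotope
`R^{(a)}` onto the Peirce homotope `(eRg, x · y = x a y)`, it is surjective, an element
`x ∈ R` is mapped into `{y ∈ eRg : a y a = 0}` iff `a x a = 0`, and consequently it induces
a ring isomorphism between the local algebra `R_a = R^{(a)}/Ker a` of `R` at `a` and the
local algebra of the associative pair `(eRg, gRe)` at `a`, commuting with the quotient
projections. -/
theorem stmt_1 {R : Type*} [Ring R] (e : R) (he : e * e = e)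
    (a : R) (ha : (1 - e) * a * e = a) :
    ∃ φ : Homotope R a →ₙ+* PairHomotope (⟨e, he⟩ : {e : R // e * e = e}) a,
      (∀ x : Homotope R a, (φ x).val = e * x.val * (1 - e)) ∧
      Function.Surjective φ ∧
      (∀ x : Homotope R a, (a * (φ x).val * a = 0 ↔ a * x.val * a = 0)) ∧
      ∃ ψ : (homotopeLocalCon a).Quotient ≃+*
          (pairLocalCon (⟨e, he⟩ : {e : R // e * e = e}) a).Quotient,
        ∀ x : Homotope R a,
          ψ (x : (homotopeLocalCon a).Quotient)
            = ((φ x : PairHomotope (⟨e, he⟩ : {e : R // e * e = e}) a) :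
                (pairLocalCon (⟨e, he⟩ : {e : R // e * e = e}) a).Quotient) := by
  have hg : (1 - e) * (1 - e) = 1 - e := by
    rw [mul_sub, sub_mul, sub_mul, he, one_mul, mul_one, one_mul]; abel
  have hae : a * e = a := by
    nth_rewrite 1 [← ha]; rw [mul_assoc ((1 - e) * a), he, ha]
  have hga : (1 - e) * a = a := by
    nth_rewrite 1 [← ha]; rw [← mul_assoc, ← mul_assoc, hg, ha]
  have hkey : ∀ x : R, a * (e * x * (1 - e)) * a = a * x * a := by
    intro x
    calc a * (e * x * (1 - e)) * a = (a * e) * x * ((1 - e) * a) := by noncomm_ring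
    _ = a * x * a := by rw [hae, hga]
  set E : {e : R // e * e = e} := ⟨e, he⟩ with hE
  have hmem : ∀ x : R, e * (e * x * (1 - e)) * (1 - e) = e * x * (1 - e) := by
    intro x
    calc e * (e * x * (1 - e)) * (1 - e) = (e * e) * x * ((1 - e) * (1 - e)) := by
          noncomm_ring
    _ = e * x * (1 - e) := by rw [he, hg]
  set φ : Homotope R a →ₙ+* PairHomotope E a :=
    { toFun := fun x => (⟨e * x.val * (1 - e), hmem x.val⟩ : PairHomotope E a),
      map_zero' := Subtype.ext (by
        show e * (0 : R) * (1 - e) = 0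
        simp),
      map_add' := fun x y => Subtype.ext (by
        show e * (x.val + y.val) * (1 - e) = e * x.val * (1 - e) + e * y.val * (1 - e)
        noncomm_ring),
      map_mul' := fun x y => Subtype.ext (by
        show e * (x.val * a * y.val) * (1 - e)
            = (e * x.val * (1 - e)) * a * (e * y.val * (1 - e))
        calc e * (x.val * a * y.val) * (1 - e)
            = (e * x.val) * ((1 - e) * a * e) * (y.val * (1 - e)) := by
              rw [ha]; noncomm_ring
          _ = (e * x.val * (1 - e)) * a * (e * y.val * (1 - e)) := by noncomm_ring) }
      with hphi
  have hφval : ∀ x : Homotope R a, (φ x).val = e * x.val * (1 - e) := fun x => rfl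
  refine ⟨φ, fun x => rfl, ?_, ?_, ?_⟩
  · intro y
    exact ⟨Homotope.of a y.val, Subtype.ext y.prop⟩
  · intro x
    show a * (e * x.val * (1 - e)) * a = 0 ↔ a * x.val * a = 0
    rw [hkey]
  · -- the induced isomorphism between the local algebras
    have toF_resp : ∀ x y : Homotope R a, homotopeLocalCon a x y →
        ((φ x : PairHomotope E a) : (pairLocalCon E a).Quotient) = (φ y : PairHomotope E a) := by
      intro x y h
      apply (RingCon.eq _).mpr
      show a * ((φ x).val - (φ y).val) * a = 0
      have h1 : (φ x).val - (φ y).val = e * (x.val - y.val) * (1 - e) := by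
        rw [hφval, hφval]; noncomm_ring
      rw [h1, hkey]
      exact h
    have invF_resp : ∀ y z : PairHomotope E a, pairLocalCon E a y z →
        ((Homotope.of a y.val : Homotope R a) : (homotopeLocalCon a).Quotient)
          = (Homotope.of a z.val : Homotope R a) := by
      intro y z h
      apply (RingCon.eq _).mpr
      exact h
    refine ⟨{ toFun := Quotient.lift
                (fun x : Homotope R a => ((φ x : PairHomotope E a) : (pairLocalCon E a).Quotient))
                toF_resp,
              invFun := Quotient.lift
                (fun y : PairHomotope E a =>
                  ((Homotope.of a y.val : Homotope R a) : (homotopeLocalCon a).Quotient))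
                invF_resp,
              left_inv := ?_, right_inv := ?_, map_mul' := ?_, map_add' := ?_ },
            fun x => rfl⟩
    · refine Quotient.ind ?_
      intro x
      show ((Homotope.of a (φ x).val : Homotope R a) : (homotopeLocalCon a).Quotient)
          = (x : (homotopeLocalCon a).Quotient)
      apply (RingCon.eq _).mpr
      show a * ((Homotope.of a (φ x).val).val - x.val) * a = 0
      have h1 : a * ((Homotope.of a (φ x).val).val - x.val) * a
          = a * (e * x.val * (1 - e)) * a - a * x.val * a := by
        show a * ((e * x.val * (1 - e)) - x.val) * a
            = a * (e * x.val * (1 - e)) * a - a * x.val * a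
        noncomm_ring
      rw [h1, hkey, sub_self]
    · refine Quotient.ind ?_
      intro y
      show ((φ (Homotope.of a y.val) : PairHomotope E a) : (pairLocalCon E a).Quotient)
          = (y : (pairLocalCon E a).Quotient)
      congr 1
      exact Subtype.ext y.prop
    · refine Quotient.ind₂ ?_
      intro x y
      show ((φ (x * y) : PairHomotope E a) : (pairLocalCon E a).Quotient)
          = ((φ x : PairHomotope E a) : (pairLocalCon E a).Quotient)
            * ((φ y : PairHomotope E a) : (pairLocalCon E a).Quotient)
      rw [map_mul]
      rfl
    · refine Quotient.ind₂ ?_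
      intro x y
      show ((φ (x + y) : PairHomotope E a) : (pairLocalCon E a).Quotient)
          = ((φ x : PairHomotope E a) : (pairLocalCon E a).Quotient)
            + ((φ y : PairHomotope E a) : (pairLocalCon E a).Quotient)
      rw [map_add]
      rfl
end

section
/- If I is a two-sided ideal of R with eIg = 0 and gIe = 0, then I = 0. Equivalently, every nonzero two-sided ideal I of R meets the associative pair (eRg, gRe) nontrivially: eIg ≠ 0 or gIe ≠ 0. -/
/-- Let `R` be a unital noncomm_ring with idempotent `e`, `g = 1 - e`, satisfying the
corner-faithfulness conditions of the standard imbedding of an associative pair.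
If `I` is a two-sided ideal of `R` with `eIg = 0` and `gIe = 0`, then `I = 0`. -/
theorem stmt_2 {R : Type*} [Ring R] (e : R) (he : e * e = e)
    (hcorner_e : ∀ x : R, e * x * e = x →
      (∀ r : R, x * (e * r * (1 - e)) = 0) → (∀ r : R, ((1 - e) * r * e) * x = 0) → x = 0)
    (hcorner_g : ∀ x : R, (1 - e) * x * (1 - e) = x →
      (∀ r : R, x * ((1 - e) * r * e) = 0) → (∀ r : R, (e * r * (1 - e)) * x = 0) → x = 0)
    (I : TwoSidedIdeal R)
    (hIeg : ∀ x ∈ I, e * x * (1 - e) = 0)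
    (hIge : ∀ x ∈ I, (1 - e) * x * e = 0) :
    I = ⊥ := by
  rw [eq_bot_iff]
  intro x hx
  rw [TwoSidedIdeal.mem_bot]
  have hexe : e * x * e = 0 := by
    apply hcorner_e
    · rw [show e * (e * x * e) * e = (e * e) * x * (e * e) by noncomm_ring, he]
    · intro r
      have h := hIeg (x * (e * r)) (I.mul_mem_right _ _ hx)
      calc e * x * e * (e * r * (1 - e)) = e * (x * (e * r)) * (1 - e) := by
            rw [show e * x * e * (e * r * (1 - e)) = e * x * (e * e) * r * (1 - e) by noncomm_ring, he]
            noncomm_ring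
        _ = 0 := h
    · intro r
      have h := hIge ((r * e) * x) (I.mul_mem_left _ _ hx)
      calc (1 - e) * r * e * (e * x * e) = (1 - e) * ((r * e) * x) * e := by
            rw [show (1 - e) * r * e * (e * x * e) = (1 - e) * r * (e * e) * x * e by noncomm_ring, he]
            noncomm_ring
        _ = 0 := h
  have hgxg : (1 - e) * x * (1 - e) = 0 := by
    apply hcorner_g
    · have hg : (1 - e) * (1 - e) = (1 - e) := by
        rw [sub_mul, mul_sub, mul_sub, he]; noncomm_ring
      rw [show (1-e) * ((1-e) * x * (1-e)) * (1-e) = ((1-e)*(1-e)) * x * ((1-e)*(1-e)) by noncomm_ring,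
        hg]
    · intro r
      have h := hIge (x * ((1 - e) * r)) (I.mul_mem_right _ _ hx)
      have hg : (1 - e) * (1 - e) = (1 - e) := by
        rw [sub_mul, mul_sub, mul_sub, he]; noncomm_ring
      calc (1-e) * x * (1-e) * ((1-e) * r * e)
            = (1-e) * (x * ((1-e) * r)) * e := by
            rw [show (1-e) * x * (1-e) * ((1-e) * r * e)
              = (1-e) * x * ((1-e)*(1-e)) * r * e by noncomm_ring, hg]; noncomm_ring
        _ = 0 := h
    · intro r
      have h := hIeg ((r * (1 - e)) * x) (I.mul_mem_left _ _ hx)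
      have hg : (1 - e) * (1 - e) = (1 - e) := by
        rw [sub_mul, mul_sub, mul_sub, he]; noncomm_ring
      calc e * r * (1-e) * ((1-e) * x * (1-e))
            = e * ((r * (1-e)) * x) * (1-e) := by
            rw [show e * r * (1-e) * ((1-e) * x * (1-e))
              = e * r * ((1-e)*(1-e)) * x * (1-e) by noncomm_ring, hg]; noncomm_ring
        _ = 0 := h
  have heg := hIeg x hx
  have hge := hIge x hx
  have : x = e * x * e + e * x * (1 - e) + (1 - e) * x * e + (1 - e) * x * (1 - e) := by noncomm_ring
  rw [this, hexe, heg, hge, hgxg]; simp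
end

section
/- Let (I⁺, I⁻) be a pair ideal of (A⁺, A⁻) = (eRg, gRe). Then the two-sided ideal of R generated by I⁺ ∪ I⁻ is exactly the Φ-submodule S = span_Φ(I⁺A⁻ ∪ A⁺I⁻) + I⁺ + I⁻ + span_Φ(I⁻A⁺ ∪ A⁻I⁺), where the first summand lies in eRe, the last lies in gRg, and the sum of the four summands is direct. In particular, if I⁺ ≠ 0 or I⁻ ≠ 0 then this ideal is nonzero. -/
/-- The Peirce space `eRg` (`g = 1 - e`), i.e. `A⁺` of the associative pair `(eRg, gRe)`. -/
def peirceP {R : Type*} [Ring R] (e : R) : Set R := {x | e * x * (1 - e) = x}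

/-- The Peirce space `gRe` (`g = 1 - e`), i.e. `A⁻` of the associative pair `(eRg, gRe)`. -/
def peirceM {R : Type*} [Ring R] (e : R) : Set R := {x | (1 - e) * x * e = x}

/-- A pair ideal `(I⁺, I⁻)` of the associative pair `(A⁺, A⁻) = (eRg, gRe)`:
`I⁺ ⊆ eRg`, `I⁻ ⊆ gRe` are `Φ`-submodules with `A⁺A⁻I⁺ ⊆ I⁺`, `I⁺A⁻A⁺ ⊆ I⁺`, `A⁺I⁻A⁺ ⊆ I⁺`,
`A⁻A⁺I⁻ ⊆ I⁻`, `I⁻A⁺A⁻ ⊆ I⁻` and `A⁻I⁺A⁻ ⊆ I⁻` (all products taken in `R`). -/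
def IsPairIdeal (Φ : Type*) {R : Type*} [CommRing Φ] [Ring R] [Algebra Φ R]
    (e : R) (Ip Im : Submodule Φ R) : Prop :=
  (Ip : Set R) ⊆ peirceP e ∧ (Im : Set R) ⊆ peirceM e ∧
  (∀ x ∈ peirceP e, ∀ y ∈ peirceM e, ∀ z ∈ Ip, x * y * z ∈ Ip) ∧
  (∀ z ∈ Ip, ∀ y ∈ peirceM e, ∀ x ∈ peirceP e, z * y * x ∈ Ip) ∧
  (∀ x ∈ peirceP e, ∀ u ∈ Im, ∀ z ∈ peirceP e, x * u * z ∈ Ip) ∧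
  (∀ x ∈ peirceM e, ∀ y ∈ peirceP e, ∀ u ∈ Im, x * y * u ∈ Im) ∧
  (∀ u ∈ Im, ∀ y ∈ peirceP e, ∀ x ∈ peirceM e, u * y * x ∈ Im) ∧
  (∀ x ∈ peirceM e, ∀ z ∈ Ip, ∀ y ∈ peirceM e, x * z * y ∈ Im)

section helpers
variable {R : Type*} [Ring R] {e : R}

lemma aux_heg (he : e * e = e) : e * (1 - e) = 0 := by
  rw [mul_sub, mul_one, he, sub_self]

lemma aux_hge (he : e * e = e) : (1 - e) * e = 0 := by
  rw [sub_mul, one_mul, he, sub_self]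

lemma aux_hg (he : e * e = e) : (1 - e) * (1 - e) = 1 - e := by
  rw [sub_mul, one_mul, mul_sub, mul_one, he, sub_self, sub_zero]

lemma offdiag_facts (he : e * e = e) {x : R} (hx : x ∈ peirceP e) :
    e * x = x ∧ x * (1 - e) = x ∧ x * e = 0 ∧ (1 - e) * x = 0 := by
  simp only [peirceP, Set.mem_setOf_eq] at hx
  refine ⟨?_, ?_, ?_, ?_⟩
  · calc e * x = e * (e * x * (1 - e)) := by rw [hx]
      _ = (e * e) * x * (1 - e) := by noncomm_ring
      _ = x := by rw [he, hx]
  · calc x * (1 - e) = (e * x * (1 - e)) * (1 - e) := by rw [hx]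
      _ = e * x * ((1 - e) * (1 - e)) := by noncomm_ring
      _ = x := by rw [aux_hg he, hx]
  · calc x * e = (e * x * (1 - e)) * e := by rw [hx]
      _ = e * x * ((1 - e) * e) := by noncomm_ring
      _ = 0 := by rw [aux_hge he, mul_zero]
  · calc (1 - e) * x = (1 - e) * (e * x * (1 - e)) := by rw [hx]
      _ = ((1 - e) * e) * x * (1 - e) := by noncomm_ring
      _ = 0 := by rw [aux_hge he, zero_mul, zero_mul]

lemma offdiagM_facts (he : e * e = e) {x : R} (hx : x ∈ peirceM e) :
    (1 - e) * x = x ∧ x * e = x ∧ x * (1 - e) = 0 ∧ e * x = 0 := by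
  have h := offdiag_facts (e := 1 - e) (aux_hg he)
    (x := x) (by simp only [peirceP, Set.mem_setOf_eq, sub_sub_cancel]; exact hx)
  rwa [sub_sub_cancel] at h

lemma corner_facts (he : e * e = e) {x : R} (hx : e * x * e = x) :
    e * x = x ∧ x * e = x ∧ (1 - e) * x = 0 ∧ x * (1 - e) = 0 := by
  refine ⟨?_, ?_, ?_, ?_⟩
  · calc e * x = e * (e * x * e) := by rw [hx]
      _ = (e * e) * x * e := by noncomm_ring
      _ = x := by rw [he, hx]
  · calc x * e = (e * x * e) * e := by rw [hx]
      _ = e * x * (e * e) := by noncomm_ring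
      _ = x := by rw [he, hx]
  · calc (1 - e) * x = (1 - e) * (e * x * e) := by rw [hx]
      _ = ((1 - e) * e) * x * e := by noncomm_ring
      _ = 0 := by rw [aux_hge he, zero_mul, zero_mul]
  · calc x * (1 - e) = (e * x * e) * (1 - e) := by rw [hx]
      _ = e * x * (e * (1 - e)) := by noncomm_ring
      _ = 0 := by rw [aux_heg he, mul_zero]

lemma cornerG_facts (he : e * e = e) {x : R} (hx : (1 - e) * x * (1 - e) = x) :
    (1 - e) * x = x ∧ x * (1 - e) = x ∧ e * x = 0 ∧ x * e = 0 := by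
  have h := corner_facts (e := 1 - e) (aux_hg he) hx
  rwa [sub_sub_cancel] at h

end helpers

/-- corner submodule `{x | a*x*b = x}`. -/
def cornerSubmodule (Φ : Type*) {R : Type*} [CommRing Φ] [Ring R] [Algebra Φ R]
    (a b : R) : Submodule Φ R where
  carrier := {x | a * x * b = x}
  add_mem' {x y} hx hy := by
    simp only [Set.mem_setOf_eq] at *
    rw [mul_add, add_mul, hx, hy]
  zero_mem' := by simp
  smul_mem' c x hx := by
    simp only [Set.mem_setOf_eq] at *
    rw [mul_smul_comm, smul_mul_assoc, hx]

/-- Let `Φ` be a commutative unital ring, `R` a unital `Φ`-algebra tightly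
generated by the associative pair `(A⁺, A⁻) = (eRg, gRe)` (the setting of the standard
imbedding), and let `(I⁺, I⁻)` be a pair ideal of `(A⁺, A⁻)`.  Then the two-sided ideal of `R`
generated by `I⁺ ∪ I⁻` is exactly
`S = span_Φ(I⁺A⁻ ∪ A⁺I⁻) + I⁺ + I⁻ + span_Φ(I⁻A⁺ ∪ A⁻I⁺)`, where the first summand lies in
`eRe`, the last lies in `gRg`, and the sum of the four summands is direct.  In particular, if
`I⁺ ≠ 0` or `I⁻ ≠ 0`, this ideal is nonzero. -/
theorem stmt_3 (Φ : Type*) {R : Type*} [CommRing Φ] [Ring R] [Algebra Φ R]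
    (e : R) (he : e * e = e)
    (htight_e : {x : R | e * x * e = x} =
      ↑(Submodule.span Φ (insert e {z : R | ∃ p ∈ peirceP e, ∃ q ∈ peirceM e, z = p * q})))
    (htight_g : {x : R | (1 - e) * x * (1 - e) = x} =
      ↑(Submodule.span Φ
        (insert (1 - e) {z : R | ∃ p ∈ peirceM e, ∃ q ∈ peirceP e, z = p * q})))
    (Ip Im : Submodule Φ R) (hPI : IsPairIdeal Φ e Ip Im) :
    let S1 : Submodule Φ R := Submodule.span Φ
      {z : R | (∃ p ∈ Ip, ∃ q ∈ peirceM e, z = p * q) ∨ (∃ p ∈ peirceP e, ∃ q ∈ Im, z = p * q)}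
    let S4 : Submodule Φ R := Submodule.span Φ
      {z : R | (∃ p ∈ Im, ∃ q ∈ peirceP e, z = p * q) ∨ (∃ p ∈ peirceM e, ∃ q ∈ Ip, z = p * q)}
    ((TwoSidedIdeal.span ((Ip : Set R) ∪ (Im : Set R)) : TwoSidedIdeal R) : Set R) =
        ↑(S1 ⊔ Ip ⊔ Im ⊔ S4) ∧
    (S1 : Set R) ⊆ {x | e * x * e = x} ∧
    (S4 : Set R) ⊆ {x | (1 - e) * x * (1 - e) = x} ∧
    (∀ x1 ∈ S1, ∀ x2 ∈ Ip, ∀ x3 ∈ Im, ∀ x4 ∈ S4,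
      x1 + x2 + x3 + x4 = 0 → x1 = 0 ∧ x2 = 0 ∧ x3 = 0 ∧ x4 = 0) ∧
    ((Ip ≠ ⊥ ∨ Im ≠ ⊥) → TwoSidedIdeal.span ((Ip : Set R) ∪ (Im : Set R)) ≠ ⊥) := by
  intro S1 S4
  obtain ⟨hIpP, hImM, h1, h2, h3, h4, h5, h6⟩ := hPI
  set S : Submodule Φ R := S1 ⊔ Ip ⊔ Im ⊔ S4 with hSdef
  -- S1 lands in eRe
  have hS1E : S1 ≤ cornerSubmodule Φ e e := by
    rw [Submodule.span_le]
    rintro z (⟨p, hp, q, hq, rfl⟩ | ⟨p, hp, q, hq, rfl⟩)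
    · obtain ⟨hep, -, -, -⟩ := offdiag_facts he (hIpP hp)
      obtain ⟨-, hqe, -, -⟩ := offdiagM_facts he hq
      show e * (p * q) * e = p * q
      calc e * (p * q) * e = (e * p) * (q * e) := by noncomm_ring
        _ = p * q := by rw [hep, hqe]
    · obtain ⟨hep, -, -, -⟩ := offdiag_facts he hp
      obtain ⟨-, hqe, -, -⟩ := offdiagM_facts he (hImM hq)
      show e * (p * q) * e = p * q
      calc e * (p * q) * e = (e * p) * (q * e) := by noncomm_ring
        _ = p * q := by rw [hep, hqe]
  have hS4G : S4 ≤ cornerSubmodule Φ (1 - e) (1 - e) := by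
    rw [Submodule.span_le]
    rintro z (⟨p, hp, q, hq, rfl⟩ | ⟨p, hp, q, hq, rfl⟩)
    · obtain ⟨hgp, -, -, -⟩ := offdiagM_facts he (hImM hp)
      obtain ⟨-, hqg, -, -⟩ := offdiag_facts he hq
      show (1 - e) * (p * q) * (1 - e) = p * q
      calc (1 - e) * (p * q) * (1 - e) = ((1 - e) * p) * (q * (1 - e)) := by noncomm_ring
        _ = p * q := by rw [hgp, hqg]
    · obtain ⟨hgp, -, -, -⟩ := offdiagM_facts he hp
      obtain ⟨-, hqg, -, -⟩ := offdiag_facts he (hIpP hq)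
      show (1 - e) * (p * q) * (1 - e) = p * q
      calc (1 - e) * (p * q) * (1 - e) = ((1 - e) * p) * (q * (1 - e)) := by noncomm_ring
        _ = p * q := by rw [hgp, hqg]
  -- inclusions into S
  have hS1le : S1 ≤ S := le_sup_of_le_left (le_sup_of_le_left le_sup_left)
  have hIple : Ip ≤ S := le_sup_of_le_left (le_sup_of_le_left le_sup_right)
  have hImle : Im ≤ S := le_sup_of_le_left le_sup_right
  have hS4le : S4 ≤ S := le_sup_right
  -- left multiplication by elements of the Peirce spaces
  have keyP_l : ∀ a ∈ peirceP e, ∀ s ∈ S, a * s ∈ S := by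
    intro a ha
    obtain ⟨hea, hag, hae, hga⟩ := offdiag_facts he ha
    have : S ≤ Submodule.comap (LinearMap.mulLeft Φ a) S := by
      refine sup_le (sup_le (sup_le ?_ ?_) ?_) ?_
      · intro x hx
        simp only [Submodule.mem_comap, LinearMap.mulLeft_apply]
        have hxE := hS1E hx
        have hxE' : e * x = x := (corner_facts he hxE).1
        have : a * x = 0 := by
          calc a * x = a * (e * x) := by rw [hxE']
            _ = (a * e) * x := by rw [mul_assoc]
            _ = 0 := by rw [hae, zero_mul]
        rw [this]; exact S.zero_mem
      · intro x hx
        simp only [Submodule.mem_comap, LinearMap.mulLeft_apply]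
        have hxP : e * x = x := (offdiag_facts he (hIpP hx)).1
        have : a * x = 0 := by
          calc a * x = a * (e * x) := by rw [hxP]
            _ = (a * e) * x := by rw [mul_assoc]
            _ = 0 := by rw [hae, zero_mul]
        rw [this]; exact S.zero_mem
      · intro x hx
        simp only [Submodule.mem_comap, LinearMap.mulLeft_apply]
        exact hS1le (Submodule.subset_span (Or.inr ⟨a, ha, x, hx, rfl⟩))
      · simp only [S4]
        rw [Submodule.span_le]
        rintro z (⟨p, hp, q, hq, rfl⟩ | ⟨p, hp, q, hq, rfl⟩)
        · simp only [SetLike.mem_coe, Submodule.mem_comap, LinearMap.mulLeft_apply]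
          rw [← mul_assoc]
          exact hIple (h3 a ha p hp q hq)
        · simp only [SetLike.mem_coe, Submodule.mem_comap, LinearMap.mulLeft_apply]
          rw [← mul_assoc]
          exact hIple (h1 a ha p hp q hq)
    intro s hs
    simpa using this hs
  have keyM_l : ∀ b ∈ peirceM e, ∀ s ∈ S, b * s ∈ S := by
    intro b hb
    obtain ⟨hgb, hbe, hbg, heb⟩ := offdiagM_facts he hb
    have : S ≤ Submodule.comap (LinearMap.mulLeft Φ b) S := by
      refine sup_le (sup_le (sup_le ?_ ?_) ?_) ?_
      · simp only [S1]
        rw [Submodule.span_le]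
        rintro z (⟨p, hp, q, hq, rfl⟩ | ⟨p, hp, q, hq, rfl⟩)
        · simp only [SetLike.mem_coe, Submodule.mem_comap, LinearMap.mulLeft_apply]
          rw [← mul_assoc]
          exact hImle (h6 b hb p hp q hq)
        · simp only [SetLike.mem_coe, Submodule.mem_comap, LinearMap.mulLeft_apply]
          rw [← mul_assoc]
          exact hImle (h4 b hb p hp q hq)
      · intro x hx
        simp only [Submodule.mem_comap, LinearMap.mulLeft_apply]
        exact hS4le (Submodule.subset_span (Or.inr ⟨b, hb, x, hx, rfl⟩))
      · intro x hx
        simp only [Submodule.mem_comap, LinearMap.mulLeft_apply]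
        have hxM : e * x = 0 := (offdiagM_facts he (hImM hx)).2.2.2
        have : b * x = 0 := by
          calc b * x = (b * e) * x := by rw [hbe]
            _ = b * (e * x) := by rw [mul_assoc]
            _ = 0 := by rw [hxM, mul_zero]
        rw [this]; exact S.zero_mem
      · intro x hx
        simp only [Submodule.mem_comap, LinearMap.mulLeft_apply]
        have hxG : e * x = 0 := (cornerG_facts he (hS4G hx)).2.2.1
        have : b * x = 0 := by
          calc b * x = (b * e) * x := by rw [hbe]
            _ = b * (e * x) := by rw [mul_assoc]
            _ = 0 := by rw [hxG, mul_zero]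
        rw [this]; exact S.zero_mem
    intro s hs
    simpa using this hs
  have key_e_l : ∀ s ∈ S, e * s ∈ S := by
    have : S ≤ Submodule.comap (LinearMap.mulLeft Φ e) S := by
      refine sup_le (sup_le (sup_le ?_ ?_) ?_) ?_
      · intro x hx
        simp only [Submodule.mem_comap, LinearMap.mulLeft_apply]
        rw [(corner_facts he (hS1E hx)).1]
        exact hS1le hx
      · intro x hx
        simp only [Submodule.mem_comap, LinearMap.mulLeft_apply]
        rw [(offdiag_facts he (hIpP hx)).1]
        exact hIple hx
      · intro x hx
        simp only [Submodule.mem_comap, LinearMap.mulLeft_apply]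
        rw [(offdiagM_facts he (hImM hx)).2.2.2]
        exact S.zero_mem
      · intro x hx
        simp only [Submodule.mem_comap, LinearMap.mulLeft_apply]
        rw [(cornerG_facts he (hS4G hx)).2.2.1]
        exact S.zero_mem
    intro s hs
    simpa using this hs
  have key_g_l : ∀ s ∈ S, (1 - e) * s ∈ S := by
    have : S ≤ Submodule.comap (LinearMap.mulLeft Φ (1 - e)) S := by
      refine sup_le (sup_le (sup_le ?_ ?_) ?_) ?_
      · intro x hx
        simp only [Submodule.mem_comap, LinearMap.mulLeft_apply]
        rw [(corner_facts he (hS1E hx)).2.2.1]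
        exact S.zero_mem
      · intro x hx
        simp only [Submodule.mem_comap, LinearMap.mulLeft_apply]
        rw [(offdiag_facts he (hIpP hx)).2.2.2]
        exact S.zero_mem
      · intro x hx
        simp only [Submodule.mem_comap, LinearMap.mulLeft_apply]
        rw [(offdiagM_facts he (hImM hx)).1]
        exact hImle hx
      · intro x hx
        simp only [Submodule.mem_comap, LinearMap.mulLeft_apply]
        rw [(cornerG_facts he (hS4G hx)).1]
        exact hS4le hx
    intro s hs
    simpa using this hs
  -- right multiplication versions
  have keyP_r : ∀ a ∈ peirceP e, ∀ s ∈ S, s * a ∈ S := by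
    intro a ha
    obtain ⟨hea, hag, hae, hga⟩ := offdiag_facts he ha
    have : S ≤ Submodule.comap (LinearMap.mulRight Φ a) S := by
      refine sup_le (sup_le (sup_le ?_ ?_) ?_) ?_
      · simp only [S1]
        rw [Submodule.span_le]
        rintro z (⟨p, hp, q, hq, rfl⟩ | ⟨p, hp, q, hq, rfl⟩)
        · simp only [SetLike.mem_coe, Submodule.mem_comap, LinearMap.mulRight_apply]
          exact hIple (h2 p hp q hq a ha)
        · simp only [SetLike.mem_coe, Submodule.mem_comap, LinearMap.mulRight_apply]
          exact hIple (h3 p hp q hq a ha)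
      · intro x hx
        simp only [Submodule.mem_comap, LinearMap.mulRight_apply]
        have hxg : x * e = 0 := (offdiag_facts he (hIpP hx)).2.2.1
        have : x * a = 0 := by
          calc x * a = x * (e * a) := by rw [hea]
            _ = (x * e) * a := by rw [← mul_assoc]
            _ = 0 := by rw [hxg, zero_mul]
        rw [this]; exact S.zero_mem
      · intro x hx
        simp only [Submodule.mem_comap, LinearMap.mulRight_apply]
        exact hS4le (Submodule.subset_span (Or.inl ⟨x, hx, a, ha, rfl⟩))
      · intro x hx
        simp only [Submodule.mem_comap, LinearMap.mulRight_apply]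
        have hxG : x * e = 0 := (cornerG_facts he (hS4G hx)).2.2.2
        have : x * a = 0 := by
          calc x * a = x * (e * a) := by rw [hea]
            _ = (x * e) * a := by rw [← mul_assoc]
            _ = 0 := by rw [hxG, zero_mul]
        rw [this]; exact S.zero_mem
    intro s hs
    simpa using this hs
  have keyM_r : ∀ b ∈ peirceM e, ∀ s ∈ S, s * b ∈ S := by
    intro b hb
    obtain ⟨hgb, hbe, hbg, heb⟩ := offdiagM_facts he hb
    have : S ≤ Submodule.comap (LinearMap.mulRight Φ b) S := by
      refine sup_le (sup_le (sup_le ?_ ?_) ?_) ?_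
      · intro x hx
        simp only [Submodule.mem_comap, LinearMap.mulRight_apply]
        have hxE : x * (1 - e) = 0 := (corner_facts he (hS1E hx)).2.2.2
        have : x * b = 0 := by
          calc x * b = x * ((1 - e) * b) := by rw [hgb]
            _ = (x * (1 - e)) * b := by rw [← mul_assoc]
            _ = 0 := by rw [hxE, zero_mul]
        rw [this]; exact S.zero_mem
      · intro x hx
        simp only [Submodule.mem_comap, LinearMap.mulRight_apply]
        exact hS1le (Submodule.subset_span (Or.inl ⟨x, hx, b, hb, rfl⟩))
      · intro x hx
        simp only [Submodule.mem_comap, LinearMap.mulRight_apply]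
        have hxM : x * (1 - e) = 0 := (offdiagM_facts he (hImM hx)).2.2.1
        have : x * b = 0 := by
          calc x * b = x * ((1 - e) * b) := by rw [hgb]
            _ = (x * (1 - e)) * b := by rw [← mul_assoc]
            _ = 0 := by rw [hxM, zero_mul]
        rw [this]; exact S.zero_mem
      · simp only [S4]
        rw [Submodule.span_le]
        rintro z (⟨p, hp, q, hq, rfl⟩ | ⟨p, hp, q, hq, rfl⟩)
        · simp only [SetLike.mem_coe, Submodule.mem_comap, LinearMap.mulRight_apply]
          exact hImle (h5 p hp q hq b hb)
        · simp only [SetLike.mem_coe, Submodule.mem_comap, LinearMap.mulRight_apply]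
          exact hImle (h6 p hp q hq b hb)
    intro s hs
    simpa using this hs
  have key_e_r : ∀ s ∈ S, s * e ∈ S := by
    have : S ≤ Submodule.comap (LinearMap.mulRight Φ e) S := by
      refine sup_le (sup_le (sup_le ?_ ?_) ?_) ?_
      · intro x hx
        simp only [Submodule.mem_comap, LinearMap.mulRight_apply]
        rw [(corner_facts he (hS1E hx)).2.1]
        exact hS1le hx
      · intro x hx
        simp only [Submodule.mem_comap, LinearMap.mulRight_apply]
        rw [(offdiag_facts he (hIpP hx)).2.2.1]
        exact S.zero_mem
      · intro x hx
        simp only [Submodule.mem_comap, LinearMap.mulRight_apply]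
        rw [(offdiagM_facts he (hImM hx)).2.1]
        exact hImle hx
      · intro x hx
        simp only [Submodule.mem_comap, LinearMap.mulRight_apply]
        rw [(cornerG_facts he (hS4G hx)).2.2.2]
        exact S.zero_mem
    intro s hs
    simpa using this hs
  have key_g_r : ∀ s ∈ S, s * (1 - e) ∈ S := by
    have : S ≤ Submodule.comap (LinearMap.mulRight Φ (1 - e)) S := by
      refine sup_le (sup_le (sup_le ?_ ?_) ?_) ?_
      · intro x hx
        simp only [Submodule.mem_comap, LinearMap.mulRight_apply]
        rw [(corner_facts he (hS1E hx)).2.2.2]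
        exact S.zero_mem
      · intro x hx
        simp only [Submodule.mem_comap, LinearMap.mulRight_apply]
        rw [(offdiag_facts he (hIpP hx)).2.1]
        exact hIple hx
      · intro x hx
        simp only [Submodule.mem_comap, LinearMap.mulRight_apply]
        rw [(offdiagM_facts he (hImM hx)).2.2.1]
        exact S.zero_mem
      · intro x hx
        simp only [Submodule.mem_comap, LinearMap.mulRight_apply]
        rw [(cornerG_facts he (hS4G hx)).2.1]
        exact hS4le hx
    intro s hs
    simpa using this hs
  -- closure under arbitrary left multiplication
  have keyL : ∀ (r : R), ∀ s ∈ S, r * s ∈ S := by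
    intro r s hs
    have hdec : r * s = (e * r * e) * s + (e * r * (1 - e)) * s
        + ((1 - e) * r * e) * s + ((1 - e) * r * (1 - e)) * s := by noncomm_ring
    rw [hdec]
    refine S.add_mem (S.add_mem (S.add_mem ?_ ?_) ?_) ?_
    · -- e*r*e acts through the tight generation of eRe
      have hmem : e * r * e ∈ Submodule.span Φ
          (insert e {z : R | ∃ p ∈ peirceP e, ∃ q ∈ peirceM e, z = p * q}) := by
        have h0 : e * (e * r * e) * e = e * r * e := by
          rw [show e * (e * r * e) * e = (e * e) * r * (e * e) by noncomm_ring, he]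
        have h0' : e * r * e ∈ {x : R | e * x * e = x} := h0
        rw [htight_e] at h0'
        exact h0'
      have hle : Submodule.span Φ
          (insert e {z : R | ∃ p ∈ peirceP e, ∃ q ∈ peirceM e, z = p * q}) ≤
          Submodule.comap (LinearMap.mulRight Φ s) S := by
        rw [Submodule.span_le]
        rintro y (rfl | ⟨p, hp, q, hq, rfl⟩)
        · simp only [SetLike.mem_coe, Submodule.mem_comap, LinearMap.mulRight_apply]
          exact key_e_l s hs
        · simp only [SetLike.mem_coe, Submodule.mem_comap, LinearMap.mulRight_apply]
          rw [mul_assoc]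
          exact keyP_l p hp _ (keyM_l q hq s hs)
      simpa using hle hmem
    · exact keyP_l _ (by
        show e * (e * r * (1 - e)) * (1 - e) = e * r * (1 - e)
        rw [show e * (e * r * (1 - e)) * (1 - e) = (e * e) * r * ((1 - e) * (1 - e)) by
          noncomm_ring, he, aux_hg he]) s hs
    · exact keyM_l _ (by
        show (1 - e) * ((1 - e) * r * e) * e = (1 - e) * r * e
        rw [show (1 - e) * ((1 - e) * r * e) * e = ((1 - e) * (1 - e)) * r * (e * e) by
          noncomm_ring, he, aux_hg he]) s hs
    · have hmem : (1 - e) * r * (1 - e) ∈ Submodule.span Φ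
          (insert (1 - e) {z : R | ∃ p ∈ peirceM e, ∃ q ∈ peirceP e, z = p * q}) := by
        have h0 : (1 - e) * ((1 - e) * r * (1 - e)) * (1 - e) = (1 - e) * r * (1 - e) := by
          rw [show (1 - e) * ((1 - e) * r * (1 - e)) * (1 - e)
            = ((1 - e) * (1 - e)) * r * ((1 - e) * (1 - e)) by noncomm_ring, aux_hg he]
        have h0' : (1 - e) * r * (1 - e) ∈ {x : R | (1 - e) * x * (1 - e) = x} := h0
        rw [htight_g] at h0'
        exact h0'
      have hle : Submodule.span Φ
          (insert (1 - e) {z : R | ∃ p ∈ peirceM e, ∃ q ∈ peirceP e, z = p * q}) ≤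
          Submodule.comap (LinearMap.mulRight Φ s) S := by
        rw [Submodule.span_le]
        rintro y (rfl | ⟨p, hp, q, hq, rfl⟩)
        · simp only [SetLike.mem_coe, Submodule.mem_comap, LinearMap.mulRight_apply]
          exact key_g_l s hs
        · simp only [SetLike.mem_coe, Submodule.mem_comap, LinearMap.mulRight_apply]
          rw [mul_assoc]
          exact keyM_l p hp _ (keyP_l q hq s hs)
      simpa using hle hmem
  -- closure under arbitrary right multiplication
  have keyR : ∀ (r : R), ∀ s ∈ S, s * r ∈ S := by
    intro r s hs
    have hdec : s * r = s * (e * r * e) + s * (e * r * (1 - e))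
        + s * ((1 - e) * r * e) + s * ((1 - e) * r * (1 - e)) := by noncomm_ring
    rw [hdec]
    refine S.add_mem (S.add_mem (S.add_mem ?_ ?_) ?_) ?_
    · have hmem : e * r * e ∈ Submodule.span Φ
          (insert e {z : R | ∃ p ∈ peirceP e, ∃ q ∈ peirceM e, z = p * q}) := by
        have h0 : e * (e * r * e) * e = e * r * e := by
          rw [show e * (e * r * e) * e = (e * e) * r * (e * e) by noncomm_ring, he]
        have h0' : e * r * e ∈ {x : R | e * x * e = x} := h0
        rw [htight_e] at h0'
        exact h0'
      have hle : Submodule.span Φ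
          (insert e {z : R | ∃ p ∈ peirceP e, ∃ q ∈ peirceM e, z = p * q}) ≤
          Submodule.comap (LinearMap.mulLeft Φ s) S := by
        rw [Submodule.span_le]
        rintro y (rfl | ⟨p, hp, q, hq, rfl⟩)
        · simp only [SetLike.mem_coe, Submodule.mem_comap, LinearMap.mulLeft_apply]
          exact key_e_r s hs
        · simp only [SetLike.mem_coe, Submodule.mem_comap, LinearMap.mulLeft_apply]
          rw [← mul_assoc]
          exact keyM_r q hq _ (keyP_r p hp s hs)
      simpa using hle hmem
    · exact keyP_r _ (by
        show e * (e * r * (1 - e)) * (1 - e) = e * r * (1 - e)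
        rw [show e * (e * r * (1 - e)) * (1 - e) = (e * e) * r * ((1 - e) * (1 - e)) by
          noncomm_ring, he, aux_hg he]) s hs
    · exact keyM_r _ (by
        show (1 - e) * ((1 - e) * r * e) * e = (1 - e) * r * e
        rw [show (1 - e) * ((1 - e) * r * e) * e = ((1 - e) * (1 - e)) * r * (e * e) by
          noncomm_ring, he, aux_hg he]) s hs
    · have hmem : (1 - e) * r * (1 - e) ∈ Submodule.span Φ
          (insert (1 - e) {z : R | ∃ p ∈ peirceM e, ∃ q ∈ peirceP e, z = p * q}) := by
        have h0 : (1 - e) * ((1 - e) * r * (1 - e)) * (1 - e) = (1 - e) * r * (1 - e) := by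
          rw [show (1 - e) * ((1 - e) * r * (1 - e)) * (1 - e)
            = ((1 - e) * (1 - e)) * r * ((1 - e) * (1 - e)) by noncomm_ring, aux_hg he]
        have h0' : (1 - e) * r * (1 - e) ∈ {x : R | (1 - e) * x * (1 - e) = x} := h0
        rw [htight_g] at h0'
        exact h0'
      have hle : Submodule.span Φ
          (insert (1 - e) {z : R | ∃ p ∈ peirceM e, ∃ q ∈ peirceP e, z = p * q}) ≤
          Submodule.comap (LinearMap.mulLeft Φ s) S := by
        rw [Submodule.span_le]
        rintro y (rfl | ⟨p, hp, q, hq, rfl⟩)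
        · simp only [SetLike.mem_coe, Submodule.mem_comap, LinearMap.mulLeft_apply]
          exact key_g_r s hs
        · simp only [SetLike.mem_coe, Submodule.mem_comap, LinearMap.mulLeft_apply]
          rw [← mul_assoc]
          exact keyP_r q hq _ (keyM_r p hp s hs)
      simpa using hle hmem
  -- the two-sided ideal built on S
  let T : TwoSidedIdeal R := TwoSidedIdeal.mk' (S : Set R) S.zero_mem
    (fun ha hb => S.add_mem ha hb) (fun ha => S.neg_mem ha)
    (fun {x y} hy => keyL x y hy) (fun {x y} hx => keyR y x hx)
  -- main equality
  have hmain : ((TwoSidedIdeal.span ((Ip : Set R) ∪ (Im : Set R)) : TwoSidedIdeal R) : Set R)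
      = ↑S := by
    apply Set.Subset.antisymm
    · intro x hx
      have hx' : x ∈ TwoSidedIdeal.span ((Ip : Set R) ∪ (Im : Set R)) := hx
      have hT : x ∈ T := by
        refine TwoSidedIdeal.mem_span_iff.mp hx' T ?_
        rintro y (hy | hy)
        · rw [SetLike.mem_coe, TwoSidedIdeal.mem_mk']
          exact hIple hy
        · rw [SetLike.mem_coe, TwoSidedIdeal.mem_mk']
          exact hImle hy
      rwa [TwoSidedIdeal.mem_mk'] at hT
    · -- S ⊆ ideal
      let J := TwoSidedIdeal.span ((Ip : Set R) ∪ (Im : Set R))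
      let J' : Submodule Φ R :=
        { carrier := (J : Set R)
          add_mem' := fun ha hb => J.add_mem ha hb
          zero_mem' := J.zero_mem
          smul_mem' := fun c x hx => by
            have : c • x = algebraMap Φ R c * x := Algebra.smul_def c x
            simp only [SetLike.mem_coe] at *
            rw [this]
            exact J.mul_mem_left _ _ hx }
      have hle : S ≤ J' := by
        refine sup_le (sup_le (sup_le ?_ ?_) ?_) ?_
        · rw [Submodule.span_le]
          rintro z (⟨p, hp, q, hq, rfl⟩ | ⟨p, hp, q, hq, rfl⟩)
          · exact J.mul_mem_right p q (TwoSidedIdeal.subset_span (Set.mem_union_left _ hp))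
          · exact J.mul_mem_left p q (TwoSidedIdeal.subset_span (Set.mem_union_right _ hq))
        · intro x hx
          exact TwoSidedIdeal.subset_span (Set.mem_union_left _ hx)
        · intro x hx
          exact TwoSidedIdeal.subset_span (Set.mem_union_right _ hx)
        · rw [Submodule.span_le]
          rintro z (⟨p, hp, q, hq, rfl⟩ | ⟨p, hp, q, hq, rfl⟩)
          · exact J.mul_mem_right p q (TwoSidedIdeal.subset_span (Set.mem_union_right _ hp))
          · exact J.mul_mem_left p q (TwoSidedIdeal.subset_span (Set.mem_union_left _ hq))
      intro x hx
      exact hle hx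
  refine ⟨hmain, fun x hx => hS1E hx, fun x hx => hS4G hx, ?_, ?_⟩
  · -- directness
    intro x1 hx1 x2 hx2 x3 hx3 x4 hx4 hsum
    have e1 : e * x1 * e = x1 := hS1E hx1
    obtain ⟨he2, hx2e, hx2g, hgx2⟩ := offdiag_facts he (hIpP hx2)
    obtain ⟨hgx3, hx3e, hx3g, hex3⟩ := offdiagM_facts he (hImM hx3)
    have e4 : (1 - e) * x4 * (1 - e) = x4 := hS4G hx4
    obtain ⟨hgx4', hx4g', hex4, hx4e⟩ := cornerG_facts he e4
    obtain ⟨hex1, hx1e, hgx1, hx1g⟩ := corner_facts he e1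
    have hA : x1 = 0 := by
      have : e * (x1 + x2 + x3 + x4) * e = x1 := by
        rw [show e * (x1 + x2 + x3 + x4) * e
          = e * x1 * e + (e * x2) * e + (e * x3) * e + (e * x4) * e by noncomm_ring,
          e1, he2, hx2g, hex3, zero_mul, hex4, zero_mul]
        abel
      rw [hsum, mul_zero, zero_mul] at this
      exact this.symm
    have hB : x2 = 0 := by
      have : e * (x1 + x2 + x3 + x4) * (1 - e) = x2 := by
        rw [show e * (x1 + x2 + x3 + x4) * (1 - e)
          = (e * x1) * (1 - e) + e * x2 * (1 - e) + (e * x3) * (1 - e)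
            + (e * x4) * (1 - e) by noncomm_ring,
          hex1, hx1g, hex3, zero_mul, hex4, zero_mul]
        have hx2' : e * x2 * (1 - e) = x2 := hIpP hx2
        rw [hx2']
        abel
      rw [hsum, mul_zero, zero_mul] at this
      exact this.symm
    have hC : x3 = 0 := by
      have : (1 - e) * (x1 + x2 + x3 + x4) * e = x3 := by
        rw [show (1 - e) * (x1 + x2 + x3 + x4) * e
          = ((1 - e) * x1) * e + ((1 - e) * x2) * e + (1 - e) * x3 * e
            + (1 - e) * (x4 * e) by noncomm_ring,
          hgx1, zero_mul, hgx2, zero_mul, hx4e, mul_zero]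
        have hx3' : (1 - e) * x3 * e = x3 := hImM hx3
        rw [hx3']
        abel
      rw [hsum, mul_zero, zero_mul] at this
      exact this.symm
    have hD : x4 = 0 := by
      have := hsum
      rw [hA, hB, hC] at this
      simpa using this
    exact ⟨hA, hB, hC, hD⟩
  · -- nonvanishing
    rintro (hne | hne) hbot
    · obtain ⟨x, hx, hx0⟩ := Submodule.exists_mem_ne_zero_of_ne_bot hne
      have : x ∈ TwoSidedIdeal.span ((Ip : Set R) ∪ (Im : Set R)) :=
        TwoSidedIdeal.subset_span (Set.mem_union_left _ hx)
      rw [hbot, TwoSidedIdeal.mem_bot] at this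
      exact hx0 this
    · obtain ⟨x, hx, hx0⟩ := Submodule.exists_mem_ne_zero_of_ne_bot hne
      have : x ∈ TwoSidedIdeal.span ((Ip : Set R) ∪ (Im : Set R)) :=
        TwoSidedIdeal.subset_span (Set.mem_union_right _ hx)
      rw [hbot, TwoSidedIdeal.mem_bot] at this
      exact hx0 this
end

section
/- Let (I⁺, I⁻) be an essential pair ideal of (A⁺, A⁻) = (eRg, gRe). Then the two-sided ideal of R generated by I⁺ ∪ I⁻ is an essential two-sided ideal of R, i.e. it has nonzero intersection with every nonzero two-sided ideal of R. -/
private lemma pP_left {R : Type*} [Ring R] {e x : R} (he : e * e = e)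
    (hx : x ∈ peirceP e) : e * x = x := by
  have hx' : e * x * (1 - e) = x := hx
  calc e * x = e * (e * x * (1 - e)) := by rw [hx']
    _ = e * e * x * (1 - e) := by noncomm_ring
    _ = x := by rw [he, hx']

private lemma pP_right {R : Type*} [Ring R] {e x : R} (he : e * e = e)
    (hx : x ∈ peirceP e) : x * (1 - e) = x := by
  have hg : (1 - e) * (1 - e) = 1 - e := by
    calc (1 - e) * (1 - e) = 1 - e - e + e * e := by noncomm_ring
      _ = 1 - e := by rw [he]; abel
  have hx' : e * x * (1 - e) = x := hx
  calc x * (1 - e) = (e * x * (1 - e)) * (1 - e) := by rw [hx']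
    _ = e * x * ((1 - e) * (1 - e)) := by noncomm_ring
    _ = x := by rw [hg, hx']

private lemma pM_left {R : Type*} [Ring R] {e x : R} (he : e * e = e)
    (hx : x ∈ peirceM e) : (1 - e) * x = x := by
  have hg : (1 - e) * (1 - e) = 1 - e := by
    calc (1 - e) * (1 - e) = 1 - e - e + e * e := by noncomm_ring
      _ = 1 - e := by rw [he]; abel
  have hx' : (1 - e) * x * e = x := hx
  calc (1 - e) * x = (1 - e) * ((1 - e) * x * e) := by rw [hx']
    _ = ((1 - e) * (1 - e)) * x * e := by noncomm_ring
    _ = x := by rw [hg, hx']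

private lemma pM_right {R : Type*} [Ring R] {e x : R} (he : e * e = e)
    (hx : x ∈ peirceM e) : x * e = x := by
  have hx' : (1 - e) * x * e = x := hx
  calc x * e = ((1 - e) * x * e) * e := by rw [hx']
    _ = (1 - e) * x * (e * e) := by noncomm_ring
    _ = x := by rw [he, hx']

/-- The corner `{x ∈ J | a x b = x}` as a `Φ`-submodule. -/
private def cornerSub (Φ : Type*) {R : Type*} [CommRing Φ] [Ring R] [Algebra Φ R]
    (J : TwoSidedIdeal R) (a b : R) : Submodule Φ R where
  carrier := {x | x ∈ J ∧ a * x * b = x}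
  add_mem' := by
    rintro x y ⟨hxJ, hx⟩ ⟨hyJ, hy⟩
    refine ⟨J.add_mem hxJ hyJ, ?_⟩
    rw [mul_add, add_mul, hx, hy]
  zero_mem' := ⟨J.zero_mem, by simp⟩
  smul_mem' := by
    rintro c x ⟨hxJ, hx⟩
    refine ⟨?_, ?_⟩
    · rw [Algebra.smul_def]
      exact J.mul_mem_left _ _ hxJ
    · rw [mul_smul_comm, smul_mul_assoc, hx]

private lemma mem_cornerSub {Φ : Type*} {R : Type*} [CommRing Φ] [Ring R] [Algebra Φ R]
    {J : TwoSidedIdeal R} {a b x : R} :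
    x ∈ cornerSub Φ J a b ↔ x ∈ J ∧ a * x * b = x := Iff.rfl

private lemma sandwich_P {R : Type*} [Ring R] {e x z : R} (he : e * e = e)
    (hx : x ∈ peirceP e) (hz : z ∈ peirceP e) (y : R) :
    e * (x * y * z) * (1 - e) = x * y * z := by
  calc e * (x * y * z) * (1 - e) = (e * x) * y * (z * (1 - e)) := by noncomm_ring
    _ = x * y * z := by rw [pP_left he hx, pP_right he hz]

private lemma sandwich_M {R : Type*} [Ring R] {e x z : R} (he : e * e = e)
    (hx : x ∈ peirceM e) (hz : z ∈ peirceM e) (y : R) :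
    (1 - e) * (x * y * z) * e = x * y * z := by
  calc (1 - e) * (x * y * z) * e = ((1 - e) * x) * y * (z * e) := by noncomm_ring
    _ = x * y * z := by rw [pM_left he hx, pM_right he hz]

/-- Let `Φ` be a commutative unital ring and `R` a unital `Φ`-algebra tightly
generated by the associative pair `(A⁺, A⁻) = (eRg, gRe)` and satisfying the
corner-faithfulness conditions (the setting of the standard imbedding).  If `(I⁺, I⁻)` is an
essential pair ideal of `(A⁺, A⁻)`, then the two-sided ideal of `R` generated by `I⁺ ∪ I⁻` is
an essential two-sided ideal of `R`: it meets every nonzero two-sided ideal of `R`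
nontrivially. -/
theorem stmt_4 (Φ : Type*) {R : Type*} [CommRing Φ] [Ring R] [Algebra Φ R]
    (e : R) (he : e * e = e)
    (htight_e : {x : R | e * x * e = x} =
      ↑(Submodule.span Φ (insert e {z : R | ∃ p ∈ peirceP e, ∃ q ∈ peirceM e, z = p * q})))
    (htight_g : {x : R | (1 - e) * x * (1 - e) = x} =
      ↑(Submodule.span Φ
        (insert (1 - e) {z : R | ∃ p ∈ peirceM e, ∃ q ∈ peirceP e, z = p * q})))
    (hcorner_e : ∀ x : R, e * x * e = x →
      (∀ r ∈ peirceP e, x * r = 0) → (∀ r ∈ peirceM e, r * x = 0) → x = 0)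
    (hcorner_g : ∀ x : R, (1 - e) * x * (1 - e) = x →
      (∀ r ∈ peirceM e, x * r = 0) → (∀ r ∈ peirceP e, r * x = 0) → x = 0)
    (Ip Im : Submodule Φ R) (hPI : IsPairIdeal Φ e Ip Im)
    (hess : ∀ Jp Jm : Submodule Φ R, IsPairIdeal Φ e Jp Jm → (Jp ≠ ⊥ ∨ Jm ≠ ⊥) →
      (Ip ⊓ Jp ≠ ⊥ ∨ Im ⊓ Jm ≠ ⊥)) :
    ∀ J : TwoSidedIdeal R, J ≠ ⊥ →
      ∃ x : R, x ∈ TwoSidedIdeal.span ((Ip : Set R) ∪ (Im : Set R)) ∧ x ∈ J ∧ x ≠ 0 := by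
  intro J hJ
  set g : R := 1 - e with hgdef
  have hg : g * g = g := by
    calc g * g = 1 - e - e + e * e := by rw [hgdef]; noncomm_ring
      _ = g := by rw [he, hgdef]; abel
  -- the corner pair ideal of J
  set Jp : Submodule Φ R := cornerSub Φ J e g with hJp
  set Jm : Submodule Φ R := cornerSub Φ J g e with hJm
  have hJpP : (Jp : Set R) ⊆ peirceP e := fun x hx => hx.2
  have hJmM : (Jm : Set R) ⊆ peirceM e := fun x hx => hx.2
  have hpair : IsPairIdeal Φ e Jp Jm := by
    refine ⟨hJpP, hJmM, ?_, ?_, ?_, ?_, ?_, ?_⟩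
    · intro x hx y hy z hz
      exact ⟨J.mul_mem_left _ _ hz.1, sandwich_P he hx (hJpP hz) y⟩
    · intro z hz y hy x hx
      exact ⟨J.mul_mem_right _ _ (J.mul_mem_right _ _ hz.1),
        sandwich_P he (hJpP hz) hx y⟩
    · intro x hx u hu z hz
      exact ⟨J.mul_mem_right _ _ (J.mul_mem_left _ _ hu.1), sandwich_P he hx hz u⟩
    · intro x hx y hy u hu
      exact ⟨J.mul_mem_left _ _ hu.1, sandwich_M he hx (hJmM hu) y⟩
    · intro u hu y hy x hx
      exact ⟨J.mul_mem_right _ _ (J.mul_mem_right _ _ hu.1),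
        sandwich_M he (hJmM hu) hx y⟩
    · intro x hx z hz y hy
      exact ⟨J.mul_mem_right _ _ (J.mul_mem_left _ _ hz.1), sandwich_M he hx hy z⟩
  -- J is nonzero, so the corner pair ideal is nonzero
  obtain ⟨a, haJ, ha0⟩ : ∃ a ∈ J, a ≠ 0 := by
    by_contra hc
    push_neg at hc
    refine hJ ?_
    ext x
    rw [TwoSidedIdeal.mem_bot]
    exact ⟨fun hx => hc x hx, fun hx => hx ▸ J.zero_mem⟩
  have hne : Jp ≠ ⊥ ∨ Jm ≠ ⊥ := by
    by_contra hcon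
    push_neg at hcon
    have hbp : ∀ x ∈ Jp, x = (0 : R) := (Submodule.eq_bot_iff _).mp hcon.1
    have hbm : ∀ x ∈ Jm, x = (0 : R) := (Submodule.eq_bot_iff _).mp hcon.2
    have heag : e * a * g = 0 := by
      refine hbp _ ⟨J.mul_mem_right _ _ (J.mul_mem_left _ _ haJ), ?_⟩
      calc e * (e * a * g) * g = (e * e) * a * (g * g) := by noncomm_ring
        _ = e * a * g := by rw [he, hg]
    have hgae : g * a * e = 0 := by
      refine hbm _ ⟨J.mul_mem_right _ _ (J.mul_mem_left _ _ haJ), ?_⟩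
      calc g * (g * a * e) * e = (g * g) * a * (e * e) := by noncomm_ring
        _ = g * a * e := by rw [he, hg]
    have heae : e * a * e = 0 := by
      refine hcorner_e (e * a * e) ?_ ?_ ?_
      · calc e * (e * a * e) * e = (e * e) * a * (e * e) := by noncomm_ring
          _ = e * a * e := by rw [he]
      · intro r hr
        refine hbp _ ⟨J.mul_mem_right _ _ (J.mul_mem_right _ _ (J.mul_mem_left _ _ haJ)), ?_⟩
        calc e * ((e * a * e) * r) * g = ((e * e) * a * e) * (r * g) := by noncomm_ring
          _ = (e * a * e) * r := by rw [he, pP_right he hr]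
      · intro r hr
        refine hbm _ ⟨J.mul_mem_left _ _ (J.mul_mem_right _ _ (J.mul_mem_left _ _ haJ)), ?_⟩
        calc g * (r * (e * a * e)) * e = (g * r) * (e * a * (e * e)) := by noncomm_ring
          _ = r * (e * a * e) := by rw [he, pM_left he hr]
    have hgag : g * a * g = 0 := by
      refine hcorner_g (g * a * g) ?_ ?_ ?_
      · calc g * (g * a * g) * g = (g * g) * a * (g * g) := by noncomm_ring
          _ = g * a * g := by rw [hg]
      · intro r hr
        refine hbm _ ⟨J.mul_mem_right _ _ (J.mul_mem_right _ _ (J.mul_mem_left _ _ haJ)), ?_⟩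
        calc g * ((g * a * g) * r) * e = ((g * g) * a * g) * (r * e) := by noncomm_ring
          _ = (g * a * g) * r := by rw [hg, pM_right he hr]
      · intro r hr
        refine hbp _ ⟨J.mul_mem_left _ _ (J.mul_mem_right _ _ (J.mul_mem_left _ _ haJ)), ?_⟩
        calc e * (r * (g * a * g)) * g = (e * r) * (g * a * (g * g)) := by noncomm_ring
          _ = r * (g * a * g) := by rw [hg, pP_left he hr]
    have hdecomp : a = e * a * e + e * a * g + g * a * e + g * a * g := by
      rw [hgdef]; noncomm_ring
    rw [heae, heag, hgae, hgag] at hdecomp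
    simp at hdecomp
    exact ha0 hdecomp
  rcases hess Jp Jm hpair hne with h | h
  · obtain ⟨x, hx, hx0⟩ := (Submodule.ne_bot_iff _).mp h
    rw [Submodule.mem_inf] at hx
    exact ⟨x, TwoSidedIdeal.subset_span (Set.mem_union_left _ hx.1), hx.2.1, hx0⟩
  · obtain ⟨x, hx, hx0⟩ := (Submodule.ne_bot_iff _).mp h
    rw [Submodule.mem_inf] at hx
    exact ⟨x, TwoSidedIdeal.subset_span (Set.mem_union_right _ hx.1), hx.2.1, hx0⟩
end

section
/- Let I and J be two-sided ideals of R, and let f : I → R and h : J → R be R-bimodule maps. If f(x) = h(x) for every x ∈ I ∩ J ∩ eRg and for every x ∈ I ∩ J ∩ gRe, then f(x) = h(x) for every x ∈ I ∩ J. (Two permissible maps of the standard imbedding of a semiprime associative pair that agree on the pair part of their common domain are equal there.) -/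
section
variable {R : Type*} [Ring R]

lemma aux_left {e a : R} (he : e * e = e) (hea : e * a * e = a) : e * a = a := by
  conv_lhs => rw [← hea]
  rw [← mul_assoc, ← mul_assoc, he, hea]

lemma aux_right {e a : R} (he : e * e = e) (hea : e * a * e = a) : a * e = a := by
  conv_lhs => rw [← hea]
  rw [mul_assoc, he, hea]

end

/-- Let `R` be a unital ring with idempotent `e`, `g = 1 - e`, satisfying the
semiprime corner-faithfulness conditions of the standard imbedding of a semiprime associative
pair.  If two `R`-bimodule maps `f : I → R` and `h : J → R` (encoded as functions `R → R`
whose bimodule-map properties are required only on the two-sided ideals `I` resp. `J`)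
agree on `I ∩ J ∩ eRg` and on `I ∩ J ∩ gRe`, then they agree on all of `I ∩ J`. -/
theorem stmt_7 {R : Type*} [Ring R] (e : R) (he : e * e = e)
    (hcorner_e : ∀ x : R, e * x * e = x → (∀ r : R, x * (e * r * (1 - e)) = 0) → x = 0)
    (hcorner_g : ∀ x : R, (1 - e) * x * (1 - e) = x →
      (∀ r : R, x * ((1 - e) * r * e) = 0) → x = 0)
    (I J : TwoSidedIdeal R) (f h : R → R)
    (hfadd : ∀ x ∈ I, ∀ y ∈ I, f (x + y) = f x + f y)
    (hfleft : ∀ r : R, ∀ x ∈ I, f (r * x) = r * f x)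
    (hfright : ∀ r : R, ∀ x ∈ I, f (x * r) = f x * r)
    (hhadd : ∀ x ∈ J, ∀ y ∈ J, h (x + y) = h x + h y)
    (hhleft : ∀ r : R, ∀ x ∈ J, h (r * x) = r * h x)
    (hhright : ∀ r : R, ∀ x ∈ J, h (x * r) = h x * r)
    (hagree_p : ∀ x ∈ I, x ∈ J → e * x * (1 - e) = x → f x = h x)
    (hagree_m : ∀ x ∈ I, x ∈ J → (1 - e) * x * e = x → f x = h x) :
    ∀ x ∈ I, x ∈ J → f x = h x := by
  have hgg : (1 - e) * (1 - e) = 1 - e := by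
    have h1 : (1 - e) * (1 - e) = 1 - e - e + e * e := by noncomm_ring
    rw [h1, he]; abel
  -- corner lemma on eRe
  have key_e : ∀ a : R, a ∈ I → a ∈ J → e * a * e = a → f a = h a := by
    intro a haI haJ hea
    have hal := aux_left he hea
    have har := aux_right he hea
    have haeI : a * e ∈ I := I.mul_mem_right a e haI
    have haeJ : a * e ∈ J := J.mul_mem_right a e haJ
    have hea' : e * (a * e) = a := by rw [← mul_assoc, hea]
    have hfe : e * f a * e = f a := by
      conv_rhs => rw [← hea']
      rw [hfleft e (a * e) haeI, hfright e a haI, mul_assoc]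
    have hhe : e * h a * e = h a := by
      conv_rhs => rw [← hea']
      rw [hhleft e (a * e) haeJ, hhright e a haJ, mul_assoc]
    have hw : ∀ r : R, (f a - h a) * (e * r * (1 - e)) = 0 := by
      intro r
      set s := e * r * (1 - e) with hs
      have hsI : a * s ∈ I := I.mul_mem_right a s haI
      have hsJ : a * s ∈ J := J.mul_mem_right a s haJ
      have hid : e * (a * s) * (1 - e) = a * s := by
        rw [← mul_assoc e a s, hal, mul_assoc a s, hs, mul_assoc (e * r), hgg,
          ← mul_assoc]
      have h1 := hfright s a haI
      have h2 := hhright s a haJ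
      have h3 := hagree_p (a * s) hsI hsJ hid
      rw [h1, h2] at h3
      rw [sub_mul, h3, sub_self]
    have hww : e * (f a - h a) * e = f a - h a := by
      rw [mul_sub e (f a) (h a), sub_mul (e * f a) (e * h a) e, hfe, hhe]
    exact sub_eq_zero.mp (hcorner_e (f a - h a) hww hw)
  -- corner lemma on gRg
  have key_g : ∀ a : R, a ∈ I → a ∈ J → (1 - e) * a * (1 - e) = a → f a = h a := by
    intro a haI haJ hea
    have hal := aux_left hgg hea
    have har := aux_right hgg hea
    have haeI : a * (1 - e) ∈ I := I.mul_mem_right a (1 - e) haI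
    have haeJ : a * (1 - e) ∈ J := J.mul_mem_right a (1 - e) haJ
    have hea' : (1 - e) * (a * (1 - e)) = a := by rw [← mul_assoc, hea]
    have hfe : (1 - e) * f a * (1 - e) = f a := by
      conv_rhs => rw [← hea']
      rw [hfleft (1 - e) (a * (1 - e)) haeI, hfright (1 - e) a haI, mul_assoc]
    have hhe : (1 - e) * h a * (1 - e) = h a := by
      conv_rhs => rw [← hea']
      rw [hhleft (1 - e) (a * (1 - e)) haeJ, hhright (1 - e) a haJ, mul_assoc]
    have hw : ∀ r : R, (f a - h a) * ((1 - e) * r * e) = 0 := by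
      intro r
      set s := (1 - e) * r * e with hs
      have hsI : a * s ∈ I := I.mul_mem_right a s haI
      have hsJ : a * s ∈ J := J.mul_mem_right a s haJ
      have hid : (1 - e) * (a * s) * e = a * s := by
        rw [← mul_assoc (1 - e) a s, hal, mul_assoc a s, hs, mul_assoc ((1 - e) * r), he,
          ← mul_assoc]
      have h1 := hfright s a haI
      have h2 := hhright s a haJ
      have h3 := hagree_m (a * s) hsI hsJ hid
      rw [h1, h2] at h3
      rw [sub_mul, h3, sub_self]
    have hww : (1 - e) * (f a - h a) * (1 - e) = f a - h a := by
      rw [mul_sub (1 - e) (f a) (h a), sub_mul ((1 - e) * f a) ((1 - e) * h a) (1 - e), hfe, hhe]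
    exact sub_eq_zero.mp (hcorner_g (f a - h a) hww hw)
  intro x hxI hxJ
  have hp1I : e * x * e ∈ I := I.mul_mem_right _ e (I.mul_mem_left e x hxI)
  have hp1J : e * x * e ∈ J := J.mul_mem_right _ e (J.mul_mem_left e x hxJ)
  have hp2I : e * x * (1 - e) ∈ I := I.mul_mem_right _ _ (I.mul_mem_left e x hxI)
  have hp2J : e * x * (1 - e) ∈ J := J.mul_mem_right _ _ (J.mul_mem_left e x hxJ)
  have hp3I : (1 - e) * x * e ∈ I := I.mul_mem_right _ _ (I.mul_mem_left _ x hxI)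
  have hp3J : (1 - e) * x * e ∈ J := J.mul_mem_right _ _ (J.mul_mem_left _ x hxJ)
  have hp4I : (1 - e) * x * (1 - e) ∈ I := I.mul_mem_right _ _ (I.mul_mem_left _ x hxI)
  have hp4J : (1 - e) * x * (1 - e) ∈ J := J.mul_mem_right _ _ (J.mul_mem_left _ x hxJ)
  have he1 : f (e * x * e) = h (e * x * e) := by
    apply key_e _ hp1I hp1J
    rw [← mul_assoc, ← mul_assoc, he, mul_assoc (e * x), he]
  have he2 : f (e * x * (1 - e)) = h (e * x * (1 - e)) := by
    apply hagree_p _ hp2I hp2J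
    rw [← mul_assoc, ← mul_assoc, he, mul_assoc (e * x), hgg]
  have he3 : f ((1 - e) * x * e) = h ((1 - e) * x * e) := by
    apply hagree_m _ hp3I hp3J
    rw [← mul_assoc, ← mul_assoc, hgg, mul_assoc ((1 - e) * x), he]
  have he4 : f ((1 - e) * x * (1 - e)) = h ((1 - e) * x * (1 - e)) := by
    apply key_g _ hp4I hp4J
    rw [← mul_assoc, ← mul_assoc, hgg, mul_assoc ((1 - e) * x), hgg]
  have hx : x = e * x * e + e * x * (1 - e) + ((1 - e) * x * e + (1 - e) * x * (1 - e)) := by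
    noncomm_ring
  have h12I : e * x * e + e * x * (1 - e) ∈ I := I.add_mem hp1I hp2I
  have h12J : e * x * e + e * x * (1 - e) ∈ J := J.add_mem hp1J hp2J
  have h34I : (1 - e) * x * e + (1 - e) * x * (1 - e) ∈ I := I.add_mem hp3I hp4I
  have h34J : (1 - e) * x * e + (1 - e) * x * (1 - e) ∈ J := J.add_mem hp3J hp4J
  calc f x = f (e * x * e + e * x * (1 - e) + ((1 - e) * x * e + (1 - e) * x * (1 - e))) := by
        rw [← hx]
    _ = f (e * x * e) + f (e * x * (1 - e)) + (f ((1 - e) * x * e) + f ((1 - e) * x * (1 - e))) := by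
        rw [hfadd _ h12I _ h34I, hfadd _ hp1I _ hp2I, hfadd _ hp3I _ hp4I]
    _ = h (e * x * e) + h (e * x * (1 - e)) + (h ((1 - e) * x * e) + h ((1 - e) * x * (1 - e))) := by
        rw [he1, he2, he3, he4]
    _ = h (e * x * e + e * x * (1 - e) + ((1 - e) * x * e + (1 - e) * x * (1 - e))) := by
        rw [hhadd _ h12J _ h34J, hhadd _ hp1J _ hp2J, hhadd _ hp3J _ hp4J]
    _ = h x := by rw [← hx]
end

section
/- Let I be a two-sided ideal of R and f : I → R an R-bimodule map. If f vanishes on I ∩ eRg and on I ∩ gRe, then f vanishes on all of I. -/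
/-- Let `R` be a unital ring with idempotent `e`, `g = 1 - e`, satisfying the
semiprime corner-faithfulness conditions of the standard imbedding of a semiprime associative
pair.  If an `R`-bimodule map `f : I → R` on a two-sided ideal `I` (encoded as a function
`R → R` whose bimodule-map properties are required only on `I`) vanishes on `I ∩ eRg` and on
`I ∩ gRe`, then it vanishes on all of `I`. -/
theorem stmt_8 {R : Type*} [Ring R] (e : R) (he : e * e = e)
    (hcorner_e : ∀ x : R, e * x * e = x → (∀ r : R, x * (e * r * (1 - e)) = 0) → x = 0)
    (hcorner_g : ∀ x : R, (1 - e) * x * (1 - e) = x →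
      (∀ r : R, x * ((1 - e) * r * e) = 0) → x = 0)
    (I : TwoSidedIdeal R) (f : R → R)
    (hadd : ∀ x ∈ I, ∀ y ∈ I, f (x + y) = f x + f y)
    (hleft : ∀ r : R, ∀ x ∈ I, f (r * x) = r * f x)
    (hright : ∀ r : R, ∀ x ∈ I, f (x * r) = f x * r)
    (hvan_p : ∀ x ∈ I, e * x * (1 - e) = x → f x = 0)
    (hvan_m : ∀ x ∈ I, (1 - e) * x * e = x → f x = 0) :
    ∀ x ∈ I, f x = 0 := by
  have hg : (1 - e) * (1 - e) = 1 - e := by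
    simp [sub_mul, mul_sub, he]
  intro x hx
  -- off-diagonal parts of f x
  have hefg : e * f x * (1 - e) = 0 := by
    have hmem : e * (x * (1 - e)) ∈ I := I.mul_mem_left _ _ (I.mul_mem_right _ _ hx)
    have h1 : f (e * (x * (1 - e))) = e * f x * (1 - e) := by
      rw [hleft _ _ (I.mul_mem_right _ _ hx), hright _ _ hx, mul_assoc]
    rw [← h1]
    apply hvan_p _ hmem
    calc e * (e * (x * (1 - e))) * (1 - e)
        = (e * e) * (x * ((1 - e) * (1 - e))) := by noncomm_ring
      _ = e * (x * (1 - e)) := by rw [he, hg]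
  have hgfe : (1 - e) * f x * e = 0 := by
    have hmem : (1 - e) * (x * e) ∈ I := I.mul_mem_left _ _ (I.mul_mem_right _ _ hx)
    have h1 : f ((1 - e) * (x * e)) = (1 - e) * f x * e := by
      rw [hleft _ _ (I.mul_mem_right _ _ hx), hright _ _ hx, mul_assoc]
    rw [← h1]
    apply hvan_m _ hmem
    calc (1 - e) * ((1 - e) * (x * e)) * e
        = ((1 - e) * (1 - e)) * (x * (e * e)) := by noncomm_ring
      _ = (1 - e) * (x * e) := by rw [he, hg]
  -- diagonal parts of f x
  have hefe : e * f x * e = 0 := by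
    apply hcorner_e
    · calc e * (e * f x * e) * e = (e * e) * f x * (e * e) := by noncomm_ring
        _ = e * f x * e := by rw [he]
    · intro r
      have hmem : e * (x * (e * r * (1 - e))) ∈ I :=
        I.mul_mem_left _ _ (I.mul_mem_right _ _ hx)
      have h1 : f (e * (x * (e * r * (1 - e)))) = (e * f x * e) * (e * r * (1 - e)) := by
        rw [hleft _ _ (I.mul_mem_right _ _ hx), hright _ _ hx]
        calc e * (f x * (e * r * (1 - e))) = (e * f x) * ((e * e) * r * (1 - e)) := by
              rw [he]; noncomm_ring
          _ = (e * f x * e) * (e * r * (1 - e)) := by noncomm_ring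
      rw [← h1]
      apply hvan_p _ hmem
      calc e * (e * (x * (e * r * (1 - e)))) * (1 - e)
          = (e * e) * (x * (e * r * ((1 - e) * (1 - e)))) := by noncomm_ring
        _ = e * (x * (e * r * (1 - e))) := by rw [he, hg]
  have hgfg : (1 - e) * f x * (1 - e) = 0 := by
    apply hcorner_g
    · calc (1 - e) * ((1 - e) * f x * (1 - e)) * (1 - e)
          = ((1 - e) * (1 - e)) * f x * ((1 - e) * (1 - e)) := by noncomm_ring
        _ = (1 - e) * f x * (1 - e) := by rw [hg]
    · intro r
      have hmem : (1 - e) * (x * ((1 - e) * r * e)) ∈ I :=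
        I.mul_mem_left _ _ (I.mul_mem_right _ _ hx)
      have h1 : f ((1 - e) * (x * ((1 - e) * r * e))) =
          ((1 - e) * f x * (1 - e)) * ((1 - e) * r * e) := by
        rw [hleft _ _ (I.mul_mem_right _ _ hx), hright _ _ hx]
        calc (1 - e) * (f x * ((1 - e) * r * e))
            = ((1 - e) * f x) * (((1 - e) * (1 - e)) * r * e) := by rw [hg]; noncomm_ring
          _ = ((1 - e) * f x * (1 - e)) * ((1 - e) * r * e) := by noncomm_ring
      rw [← h1]
      apply hvan_m _ hmem
      calc (1 - e) * ((1 - e) * (x * ((1 - e) * r * e))) * e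
          = ((1 - e) * (1 - e)) * (x * ((1 - e) * r * (e * e))) := by noncomm_ring
        _ = (1 - e) * (x * ((1 - e) * r * e)) := by rw [he, hg]
  have : f x = e * f x * e + e * f x * (1 - e) + (1 - e) * f x * e
      + (1 - e) * f x * (1 - e) := by noncomm_ring
  rw [this, hefe, hefg, hgfe, hgfg]; simp
end

section
/- Let (A⁺, A⁻) be a dense subpair of (Hom_Δ(M⁻, M⁺), Hom_Δ(M⁺, M⁻)) and let a ∈ A⁻ have finite rank t ≥ 1; set W = range(a) ⊆ M⁻, a Δ-subspace of dimension t. Then the map sending x ∈ A⁺ to the endomorphism w ↦ a(x(w)) of W induces a ring isomorphism from the local algebra of the pair at a — the Peirce homotope (A⁺, x · y = x ∘ a ∘ y) modulo its ideal {x ∈ A⁺ : a ∘ x ∘ a = 0} — onto the full endomorphism ring End_Δ(W) of the t-dimensional Δ-vector space W. In particular this local algebra is a simple unital ring isomorphic to a t × t matrix ring over a division ring. -/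
/-- `(A⁺, A⁻)` is a dense subpair of `(Hom_Δ(M⁻, M⁺), Hom_Δ(M⁺, M⁻))`: both are additive
subgroups, closed under the triple products `⟨x, y, z⟩ = x ∘ y ∘ z`, and act densely: any
finite linearly independent family can be mapped to arbitrary targets by an element of `A⁺`
(resp. `A⁻`). -/
def IsDenseSubpair {Δ Mp Mm : Type*} [DivisionRing Δ]
    [AddCommGroup Mp] [Module Δ Mp] [AddCommGroup Mm] [Module Δ Mm]
    (Ap : Set (Mm →ₗ[Δ] Mp)) (Am : Set (Mp →ₗ[Δ] Mm)) : Prop :=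
  (0 ∈ Ap) ∧ (∀ x ∈ Ap, ∀ y ∈ Ap, x + y ∈ Ap) ∧ (∀ x ∈ Ap, -x ∈ Ap) ∧
  (0 ∈ Am) ∧ (∀ x ∈ Am, ∀ y ∈ Am, x + y ∈ Am) ∧ (∀ x ∈ Am, -x ∈ Am) ∧
  (∀ x ∈ Ap, ∀ y ∈ Am, ∀ z ∈ Ap, x ∘ₗ (y ∘ₗ z) ∈ Ap) ∧
  (∀ x ∈ Am, ∀ y ∈ Ap, ∀ z ∈ Am, x ∘ₗ (y ∘ₗ z) ∈ Am) ∧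
  (∀ (k : ℕ) (m : Fin k → Mm), LinearIndependent Δ m →
    ∀ n : Fin k → Mp, ∃ x ∈ Ap, ∀ i, x (m i) = n i) ∧
  (∀ (k : ℕ) (m : Fin k → Mp), LinearIndependent Δ m →
    ∀ n : Fin k → Mm, ∃ x ∈ Am, ∀ i, x (m i) = n i)

/-- Conjugation by a linear equivalence gives a ring isomorphism of endomorphism rings,
over any (possibly noncommutative) semiring. -/
def endCongrRingEquiv {R M N : Type*} [Semiring R] [AddCommMonoid M] [Module R M]
    [AddCommMonoid N] [Module R N] (e : M ≃ₗ[R] N) :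
    Module.End R M ≃+* Module.End R N where
  toFun f := e.toLinearMap ∘ₗ f ∘ₗ e.symm.toLinearMap
  invFun f := e.symm.toLinearMap ∘ₗ f ∘ₗ e.toLinearMap
  left_inv f := by ext v; simp
  right_inv f := by ext v; simp
  map_mul' f g := by ext v; simp [Module.End.mul_apply]
  map_add' f g := by ext v; simp

/-- Let `(A⁺, A⁻)` be a dense subpair of `(Hom_Δ(M⁻, M⁺), Hom_Δ(M⁺, M⁻))` and
let `a ∈ A⁻` have finite rank `t ≥ 1`; set `W = range a ⊆ M⁻`.  Then `x ↦ (w ↦ a (x w))`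
induces a ring isomorphism from the local algebra of the pair at `a` — the homotope
`(A⁺, x · y = x ∘ a ∘ y)` modulo the ideal `{x : a ∘ x ∘ a = 0}` — onto `End_Δ(W)`
(expressed here by: the map is additive and multiplicative for the homotope product on `A⁺`,
maps `A⁺` onto `End_Δ(W)`, and its kernel on `A⁺` is exactly `{x : a ∘ x ∘ a = 0}`).
In particular this local algebra is a simple unital ring isomorphic to a `t × t` matrix ring
over a division ring. -/
theorem stmt_12 {Δ Mp Mm : Type*} [DivisionRing Δ]
    [AddCommGroup Mp] [Module Δ Mp] [AddCommGroup Mm] [Module Δ Mm]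
    (Ap : Set (Mm →ₗ[Δ] Mp)) (Am : Set (Mp →ₗ[Δ] Mm))
    (hdense : IsDenseSubpair Ap Am)
    (a : Mp →ₗ[Δ] Mm) (ha : a ∈ Am) (t : ℕ) (ht : 1 ≤ t)
    (hrank : Module.finrank Δ ↥(LinearMap.range a) = t) :
    let W : Submodule Δ Mm := LinearMap.range a
    let Ψ : (Mm →ₗ[Δ] Mp) → Module.End Δ ↥W := fun x =>
      LinearMap.codRestrict W ((a ∘ₗ x) ∘ₗ W.subtype)
        (fun c => LinearMap.mem_range_self a (x (c : Mm)))
    (∀ x ∈ Ap, ∀ y ∈ Ap, Ψ (x + y) = Ψ x + Ψ y) ∧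
    (∀ x ∈ Ap, ∀ y ∈ Ap, Ψ (x ∘ₗ (a ∘ₗ y)) = Ψ x * Ψ y) ∧
    (∀ f : Module.End Δ ↥W, ∃ x ∈ Ap, Ψ x = f) ∧
    (∀ x ∈ Ap, (Ψ x = 0 ↔ a ∘ₗ (x ∘ₗ a) = 0)) ∧
    Nonempty (Module.End Δ ↥W ≃+* Matrix (Fin t) (Fin t) Δᵐᵒᵖ) := by
  intro W Ψ
  obtain ⟨-, -, -, -, -, -, -, -, hdp, -⟩ := hdense
  have hfd : FiniteDimensional Δ W := FiniteDimensional.of_finrank_pos (by rw [hrank]; omega)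
  refine ⟨?_, ?_, ?_, ?_, ?_⟩
  · intro x hx y hy; ext w; show a ((x + y) (w : Mm)) = a (x w) + a (y w); simp
  · intro x hx y hy; ext w; show a (x (a (y (w : Mm)))) = a (x (a (y w))); rfl
  · intro f
    obtain ⟨b⟩ : Nonempty (Module.Basis (Fin t) Δ W) :=
      ⟨Module.finBasisOfFinrankEq Δ W hrank⟩
    -- the basis vectors, viewed in Mm, are linearly independent
    have hli : LinearIndependent Δ (fun i => ((b i : W) : Mm)) := by
      have := b.linearIndependent
      exact this.map' W.subtype (Submodule.ker_subtype W)
    -- each f (b i) lies in range a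
    choose p hp using fun i => (f (b i)).2
    obtain ⟨x, hx, hxv⟩ := hdp t (fun i => ((b i : W) : Mm)) hli p
    refine ⟨x, hx, ?_⟩
    apply b.ext
    intro i
    apply Subtype.ext
    show a (x ((b i : W) : Mm)) = ((f (b i) : W) : Mm)
    rw [hxv i, hp i]
  · intro x hx
    constructor
    · intro h
      ext m
      have := congrArg (fun g => ((g ⟨a m, ⟨m, rfl⟩⟩ : W) : Mm)) h
      exact this
    · intro h
      ext w
      obtain ⟨m, hm⟩ := w.2
      show a (x (w : Mm)) = 0
      rw [← hm]
      exact congrFun (congrArg (fun (g : Mp →ₗ[Δ] Mm) => ⇑g) h) m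
  · obtain ⟨b⟩ : Nonempty (Module.Basis (Fin t) Δ W) :=
      ⟨Module.finBasisOfFinrankEq Δ W hrank⟩
    exact ⟨(endCongrRingEquiv b.equivFun).trans
      (((endVecRingEquivMatrixEnd (Fin t) Δ Δ)).trans
        (RingEquiv.mapMatrix (RingEquiv.moduleEndSelf Δ).symm))⟩
end

section
/- Let (A⁺, A⁻) be a dense subpair of (Hom_Δ(M⁻, M⁺), Hom_Δ(M⁺, M⁻)) and let a ∈ A⁺ have rank 1. Then the additive subgroup L generated by {x ∘ y ∘ a : x ∈ A⁺, y ∈ A⁻} is a nonzero left ideal of the pair (that is, x ∘ y ∘ l ∈ L for all x ∈ A⁺, y ∈ A⁻, l ∈ L), and it is a minimal left ideal: the only left ideals of the pair contained in L are 0 and L itself. -/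
/-- Let `(A⁺, A⁻)` be a dense subpair of `(Hom_Δ(M⁻, M⁺), Hom_Δ(M⁺, M⁻))` and
let `a ∈ A⁺` have rank 1.  Then the additive subgroup `L` generated by
`{x ∘ y ∘ a : x ∈ A⁺, y ∈ A⁻}` is a nonzero left ideal of the pair (contained in `A⁺`), and
it is minimal: the only left ideals of the pair contained in `L` are `0` and `L` itself. -/
theorem stmt_13 {Δ Mp Mm : Type*} [DivisionRing Δ]
    [AddCommGroup Mp] [Module Δ Mp] [AddCommGroup Mm] [Module Δ Mm]
    (Ap : Set (Mm →ₗ[Δ] Mp)) (Am : Set (Mp →ₗ[Δ] Mm))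
    (hdense : IsDenseSubpair Ap Am)
    (a : Mm →ₗ[Δ] Mp) (ha : a ∈ Ap)
    (hrank : Module.finrank Δ ↥(LinearMap.range a) = 1) :
    let L : AddSubgroup (Mm →ₗ[Δ] Mp) :=
      AddSubgroup.closure {z | ∃ x ∈ Ap, ∃ y ∈ Am, z = x ∘ₗ (y ∘ₗ a)}
    L ≠ ⊥ ∧
    (L : Set (Mm →ₗ[Δ] Mp)) ⊆ Ap ∧
    (∀ x ∈ Ap, ∀ y ∈ Am, ∀ l ∈ L, x ∘ₗ (y ∘ₗ l) ∈ L) ∧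
    (∀ L' : AddSubgroup (Mm →ₗ[Δ] Mp), (L' : Set (Mm →ₗ[Δ] Mp)) ⊆ Ap →
      (∀ x ∈ Ap, ∀ y ∈ Am, ∀ l ∈ L', x ∘ₗ (y ∘ₗ l) ∈ L') →
      L' ≤ L → L' = ⊥ ∨ L' = L) := by
  obtain ⟨hAp0, hApadd, hApneg, hAm0, hAmadd, hAmneg, hPtrip, hMtrip, hPdense, hMdense⟩ := hdense
  intro L
  set S : Set (Mm →ₗ[Δ] Mp) := {z | ∃ x ∈ Ap, ∃ y ∈ Am, z = x ∘ₗ (y ∘ₗ a)} with hS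
  -- extract rank-1 structure
  rw [finrank_eq_one_iff'] at hrank
  obtain ⟨v, hvne, hv⟩ := hrank
  set v0 : Mp := (v : Mp) with hv0def
  have hv0ne : v0 ≠ 0 := fun h => hvne (Subtype.ext h)
  have hc : ∀ m : Mm, ∃ c : Δ, a m = c • v0 := by
    intro m
    obtain ⟨c, hc⟩ := hv ⟨a m, LinearMap.mem_range_self a m⟩
    refine ⟨c, ?_⟩
    have := congrArg Subtype.val hc
    simpa [hv0def] using this.symm
  obtain ⟨u, hu⟩ : ∃ u, a u = v0 := v.2
  have hune : u ≠ 0 := by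
    intro h; apply hv0ne; rw [← hu, h, map_zero]
  -- density specialize to single vectors
  have densP : ∀ t : Mm, t ≠ 0 → ∀ n : Mp, ∃ x ∈ Ap, x t = n := by
    intro t ht n
    obtain ⟨x, hx, hxt⟩ := hPdense 1 (fun _ => t) (linearIndependent_unique_iff.2 ht) (fun _ => n)
    exact ⟨x, hx, hxt 0⟩
  have densM : ∀ t : Mp, t ≠ 0 → ∀ n : Mm, ∃ y ∈ Am, y t = n := by
    intro t ht n
    obtain ⟨y, hy, hyt⟩ := hMdense 1 (fun _ => t) (linearIndependent_unique_iff.2 ht) (fun _ => n)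
    exact ⟨y, hy, hyt 0⟩
  -- L ⊆ Ap
  let ApGrp : AddSubgroup (Mm →ₗ[Δ] Mp) :=
    { carrier := Ap
      add_mem' := fun h1 h2 => hApadd _ h1 _ h2
      zero_mem' := hAp0
      neg_mem' := fun h => hApneg _ h }
  have hLsub : (L : Set (Mm →ₗ[Δ] Mp)) ⊆ Ap := by
    have : L ≤ ApGrp := by
      apply AddSubgroup.closure_le _ |>.2
      rintro z ⟨x, hx, y, hy, rfl⟩
      exact hPtrip x hx y hy a ha
    exact this
  -- every element of L vanishes on ker a
  let KGrp : AddSubgroup (Mm →ₗ[Δ] Mp) :=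
    { carrier := {f : Mm →ₗ[Δ] Mp | ∀ m, a m = 0 → f m = 0}
      add_mem' := by
        intro f g hf hg m hm
        simp only [LinearMap.add_apply, hf m hm, hg m hm, add_zero]
      zero_mem' := by intro m _; rfl
      neg_mem' := by
        intro f hf m hm
        simp only [LinearMap.neg_apply, hf m hm, neg_zero] }
  have hLker : ∀ l ∈ L, ∀ m : Mm, a m = 0 → l m = 0 := by
    have : L ≤ KGrp := by
      apply AddSubgroup.closure_le _ |>.2
      rintro z ⟨x, hx, y, hy, rfl⟩ m hm
      show (x ∘ₗ (y ∘ₗ a)) m = 0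
      simp [hm]
    intro l hl
    exact this hl
  -- L is a left ideal
  have hLideal : ∀ x ∈ Ap, ∀ y ∈ Am, ∀ l ∈ L, x ∘ₗ (y ∘ₗ l) ∈ L := by
    intro x hx y hy l hl
    induction hl using AddSubgroup.closure_induction with
    | mem z hz =>
        obtain ⟨x', hx', y', hy', rfl⟩ := hz
        have : x ∘ₗ (y ∘ₗ (x' ∘ₗ (y' ∘ₗ a))) = (x ∘ₗ (y ∘ₗ x')) ∘ₗ (y' ∘ₗ a) := by
          ext m; rfl
        rw [this]
        exact AddSubgroup.subset_closure ⟨_, hPtrip x hx y hy x' hx', y', hy', rfl⟩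
    | zero =>
        have : x ∘ₗ (y ∘ₗ (0 : Mm →ₗ[Δ] Mp)) = 0 := by ext m; simp
        rw [this]; exact L.zero_mem
    | add f g _ _ hf hg =>
        have : x ∘ₗ (y ∘ₗ (f + g)) = x ∘ₗ (y ∘ₗ f) + x ∘ₗ (y ∘ₗ g) := by
          ext m; simp
        rw [this]; exact L.add_mem hf hg
    | neg f _ hf =>
        have : x ∘ₗ (y ∘ₗ (-f)) = -(x ∘ₗ (y ∘ₗ f)) := by ext m; simp
        rw [this]; exact L.neg_mem hf
  refine ⟨?_, hLsub, hLideal, ?_⟩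
  · -- L ≠ ⊥
    obtain ⟨y, hy, hyv⟩ := densM v0 hv0ne u
    have hmem : a ∘ₗ (y ∘ₗ a) ∈ L :=
      AddSubgroup.subset_closure ⟨a, ha, y, hy, rfl⟩
    intro hbot
    have : a ∘ₗ (y ∘ₗ a) = 0 := by
      rw [hbot] at hmem; simpa using hmem
    have : (a ∘ₗ (y ∘ₗ a)) u = 0 := by rw [this]; rfl
    simp only [LinearMap.comp_apply, hu, hyv] at this
    exact hv0ne this
  · -- minimality
    intro L' hL'sub hL'ideal hL'le
    by_cases hbot : L' = ⊥
    · exact Or.inl hbot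
    right
    refine le_antisymm hL'le ?_
    -- obtain nonzero b ∈ L'
    have : ∃ b ∈ L', b ≠ 0 := by
      by_contra h
      push_neg at h
      exact hbot ((AddSubgroup.eq_bot_iff_forall _).2 h)
    obtain ⟨b, hbL', hbne⟩ := this
    have hbker : ∀ m : Mm, a m = 0 → b m = 0 := hLker b (hL'le hbL')
    -- b m = c m • b u
    have hb : ∀ (m : Mm) (c : Δ), a m = c • v0 → b m = c • b u := by
      intro m c hm
      have hker : a (m - c • u) = 0 := by
        rw [map_sub, map_smul, hu, hm, sub_self]
      have := hbker _ hker
      rw [map_sub, map_smul, sub_eq_zero] at this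
      exact this
    set w : Mp := b u with hw
    have hwne : w ≠ 0 := by
      intro h
      apply hbne
      ext m
      obtain ⟨c, hcm⟩ := hc m
      rw [hb m c hcm, h, smul_zero]; rfl
    -- show generators of L lie in L'
    apply AddSubgroup.closure_le _ |>.2
    rintro z ⟨x, hx, y, hy, rfl⟩
    obtain ⟨Y, hY, hYw⟩ := densM w hwne u
    obtain ⟨X, hX, hXu⟩ := densP u hune (x (y v0))
    have key : x ∘ₗ (y ∘ₗ a) = X ∘ₗ (Y ∘ₗ b) := by
      ext m
      obtain ⟨c, hcm⟩ := hc m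
      simp only [LinearMap.comp_apply, hcm, hb m c hcm, map_smul, hYw, hXu]
    rw [key]
    exact hL'ideal X hX Y hY b hbL'
end

section
/- Let (A⁺, A⁻) be a dense subpair of (Hom_Δ(M⁻, M⁺), Hom_Δ(M⁺, M⁻)) and let a ∈ A⁺ have finite rank t ≥ 1. Then there exist elements a₁, …, a_t ∈ A⁺, each of rank 1, such that a = a₁ + ⋯ + a_t. -/
/-- Let `(A⁺, A⁻)` be a dense subpair of `(Hom_Δ(M⁻, M⁺), Hom_Δ(M⁺, M⁻))` and
let `a ∈ A⁺` have finite rank `t ≥ 1`.  Then there exist rank-one elements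
`a₁, …, a_t ∈ A⁺` with `a = a₁ + ⋯ + a_t`. -/
theorem stmt_14 {Δ Mp Mm : Type*} [DivisionRing Δ]
    [AddCommGroup Mp] [Module Δ Mp] [AddCommGroup Mm] [Module Δ Mm]
    (Ap : Set (Mm →ₗ[Δ] Mp)) (Am : Set (Mp →ₗ[Δ] Mm))
    (hdense : IsDenseSubpair Ap Am)
    (a : Mm →ₗ[Δ] Mp) (ha : a ∈ Ap) (t : ℕ) (ht : 1 ≤ t)
    (hrank : Module.finrank Δ ↥(LinearMap.range a) = t) :
    ∃ b : Fin t → (Mm →ₗ[Δ] Mp),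
      (∀ i, b i ∈ Ap ∧ Module.finrank Δ ↥(LinearMap.range (b i)) = 1) ∧
      a = ∑ i, b i := by
  classical
  obtain ⟨-, -, -, -, -, -, hclose, -, -, hdAm⟩ := hdense
  have hfd : FiniteDimensional Δ (LinearMap.range a) := by
    refine FiniteDimensional.of_finrank_pos ?_
    omega
  let B : Module.Basis (Fin t) Δ (LinearMap.range a) :=
    (Module.finBasis Δ (LinearMap.range a)).reindex (finCongr hrank)
  have hmem : ∀ i, ((B i : Mp)) ∈ LinearMap.range a := fun i => (B i).2
  choose m hm using hmem
  have hli : LinearIndependent Δ (fun i => (B i : Mp)) := by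
    have := B.linearIndependent
    exact this.map' (Submodule.subtype _) (Submodule.ker_subtype _)
  choose y hyA hy using fun i =>
    hdAm t (fun j => (B j : Mp)) hli (fun j => if j = i then m i else 0)
  set b : Fin t → (Mm →ₗ[Δ] Mp) := fun i => a ∘ₗ ((y i) ∘ₗ a) with hb
  have hbA : ∀ i, b i ∈ Ap := fun i => hclose a ha (y i) (hyA i) a ha
  -- key computation
  have key : ∀ (x : Mm) (i : Fin t),
      b i x = (B.repr ⟨a x, LinearMap.mem_range_self a x⟩ i) • (B i : Mp) := by
    intro x i
    set v : LinearMap.range a := ⟨a x, LinearMap.mem_range_self a x⟩ with hv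
    set f : (LinearMap.range a) →ₗ[Δ] Mp :=
      a ∘ₗ ((y i) ∘ₗ (Submodule.subtype _)) with hf
    have hfB : ∀ j, f (B j) = if j = i then (B i : Mp) else 0 := by
      intro j
      have : f (B j) = a ((y i) ((B j : Mp))) := rfl
      rw [this, hy i j]
      by_cases h : j = i
      · simp [h, hm i]
      · simp [h]
    have h1 : b i x = f v := rfl
    have h2 : f v = ∑ j, (B.repr v j) • f (B j) := by
      conv_lhs => rw [← B.sum_repr v]
      rw [map_sum]; exact Finset.sum_congr rfl fun j _ => map_smul f _ _
    rw [h1, h2]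
    rw [Finset.sum_eq_single i]
    · rw [hfB i]; simp
    · intro j _ hj; rw [hfB j]; simp [hj]
    · intro h; exact absurd (Finset.mem_univ i) h
  have hsum : a = ∑ i, b i := by
    ext x
    have : (∑ i, b i) x = ∑ i, b i x := by simp
    rw [this]
    set v : LinearMap.range a := ⟨a x, LinearMap.mem_range_self a x⟩ with hv
    have : ∑ i, b i x = ((∑ i, (B.repr v i) • B i : LinearMap.range a) : Mp) := by
      rw [Submodule.coe_sum]
      exact Finset.sum_congr rfl fun i _ => by rw [key x i]; rfl
    rw [this, B.sum_repr v]
  refine ⟨b, fun i => ⟨hbA i, ?_⟩, hsum⟩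
  have hne : (B i : Mp) ≠ 0 := by
    intro h
    exact B.ne_zero i (Subtype.coe_injective h)
  have hrange : LinearMap.range (b i) = Submodule.span Δ {(B i : Mp)} := by
    apply le_antisymm
    · rintro _ ⟨x, rfl⟩
      rw [key x i]
      exact Submodule.smul_mem _ _ (Submodule.mem_span_singleton_self _)
    · rw [Submodule.span_singleton_le_iff_mem]
      refine ⟨m i, ?_⟩
      have : b i (m i) = a ((y i) (a (m i))) := rfl
      rw [this, hm i, hy i i]
      simp [hm i]
  rw [hrange]
  exact finrank_span_singleton hne
end
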